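/- arXiv:math/0104115 — 12 statements merged into one kernel-verified Lean document; each statement's English description precedes it below -/
import Mathlib

section
/- Let a₁,b₁,a₂,b₂ ∈ k[X] with IsCoprime a₁ b₁ and IsCoprime a₂ b₂, and suppose a₁·b₂ ≠ a₂·b₁ (so that a₁/b₁ and a₂/b₂ are distinct points of the rational function field). Set h₁ := max(deg a₁, deg b₁) and h₂ := max(deg a₂, deg b₂). Let T := {x ∈ k : a₁(x)·b₂(x) = a₂(x)·b₁(x)} (the set of points of k where the two rational functions agree as maps to the projective line, agreement at a common pole included). Then T is finite, and: if coeff_{h₁}(a₁)·coeff_{h₂}(b₂) = coeff_{h₂}(a₂)·coeff_{h₁}(b₁) (agreement at the point at infinity) then #T ≤ h₁ + h₂ − 1, and in any case #T ≤ h₁ + h₂. -/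
/-- Genus-zero case of Proposition 1: two distinct rational functions `a₁/b₁`, `a₂/b₂`
of degrees `h₁, h₂` on the projective line agree (as maps to `P¹(k)`) at most
`h₁+h₂` rational points of `k`, and at most `h₁+h₂-1` if they also agree at infinity. -/
theorem stmt_0 {k : Type*} [Field k] (a₁ b₁ a₂ b₂ : Polynomial k)
    (hc₁ : IsCoprime a₁ b₁) (hc₂ : IsCoprime a₂ b₂)
    (hne : a₁ * b₂ ≠ a₂ * b₁)
    (h₁ h₂ : ℕ) (hh₁ : h₁ = max a₁.natDegree b₁.natDegree)
    (hh₂ : h₂ = max a₂.natDegree b₂.natDegree)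
    (T : Set k)
    (hT : T = {x : k | a₁.eval x * b₂.eval x = a₂.eval x * b₁.eval x}) :
    T.Finite ∧ T.ncard ≤ h₁ + h₂ ∧
      (a₁.coeff h₁ * b₂.coeff h₂ = a₂.coeff h₂ * b₁.coeff h₁ →
        T.ncard ≤ h₁ + h₂ - 1) := by
  classical
  set p := a₁ * b₂ - a₂ * b₁ with hp
  have hp0 : p ≠ 0 := sub_ne_zero.mpr hne
  have hsub : T ⊆ {x | p.IsRoot x} := by
    intro x hx
    rw [hT] at hx
    simp only [Set.mem_setOf_eq, Polynomial.IsRoot, hp, Polynomial.eval_sub,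
      Polynomial.eval_mul, sub_eq_zero]
    exact hx
  have hfin : Set.Finite {x | p.IsRoot x} := Polynomial.finite_setOf_isRoot hp0
  have hTfin : T.Finite := hfin.subset hsub
  have hcard : T.ncard ≤ p.natDegree := by
    have heq : {x | p.IsRoot x} = ↑p.roots.toFinset := by
      ext x; simp [Polynomial.mem_roots, hp0]
    calc T.ncard ≤ ({x | p.IsRoot x}).ncard := Set.ncard_le_ncard hsub hfin
      _ ≤ p.natDegree := by
          rw [heq, Set.ncard_coe_finset]
          exact (Multiset.toFinset_card_le _).trans (Polynomial.card_roots' p)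
  have hda₁ : a₁.natDegree ≤ h₁ := hh₁ ▸ le_max_left _ _
  have hdb₁ : b₁.natDegree ≤ h₁ := hh₁ ▸ le_max_right _ _
  have hda₂ : a₂.natDegree ≤ h₂ := hh₂ ▸ le_max_left _ _
  have hdb₂ : b₂.natDegree ≤ h₂ := hh₂ ▸ le_max_right _ _
  have hdeg : p.natDegree ≤ h₁ + h₂ := by
    refine (Polynomial.natDegree_sub_le _ _).trans (max_le ?_ ?_)
    · exact (Polynomial.natDegree_mul_le).trans (add_le_add hda₁ hdb₂)
    · exact (Polynomial.natDegree_mul_le).trans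
        (le_trans (add_le_add hda₂ hdb₁) (le_of_eq (add_comm _ _)))
  refine ⟨hTfin, hcard.trans hdeg, fun hinf => ?_⟩
  have hcoeff : p.coeff (h₁ + h₂) = 0 := by
    rw [hp, Polynomial.coeff_sub,
      Polynomial.coeff_mul_add_eq_of_natDegree_le hda₁ hdb₂,
      show h₁ + h₂ = h₂ + h₁ from add_comm _ _,
      Polynomial.coeff_mul_add_eq_of_natDegree_le hda₂ hdb₁, hinf, sub_self]
  have hlt : p.natDegree < h₁ + h₂ := by
    rcases lt_or_eq_of_le hdeg with h | h
    · exact h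
    · exfalso
      apply Polynomial.leadingCoeff_ne_zero.mpr hp0
      rw [Polynomial.leadingCoeff, h, hcoeff]
  exact hcard.trans (Nat.le_pred_of_lt hlt)
end

section
/- Let k be a field, N a positive integer, x₁,…,x_N distinct elements of k, and w₁,…,w_N ∈ k ∪ {∞} (encoded, e.g., as Option k with none = ∞). Let h, e be natural numbers with 2(h+e) < N. Suppose a, b ∈ k[X] with b ≠ 0, deg a ≤ h, deg b ≤ h, and there is a set S ⊆ {1,…,N} with #S ≤ e such that for every i ∉ S: if w_i = c ∈ k then b(x_i) ≠ 0 and a(x_i) = c·b(x_i), and if w_i = ∞ then b(x_i) = 0. Suppose a′, b′ ∈ k[X] with deg a′ ≤ h+e, deg b′ ≤ h+e satisfy, for EVERY i ∈ {1,…,N}: if w_i = c ∈ k then a′(x_i) = c·b′(x_i), and if w_i = ∞ then b′(x_i) = 0. Then a′·b = a·b′. -/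
/-- Genus-zero decoding theorem: if the word `w` agrees with `f = a/b` (degree `≤ h`)
at all but at most `e` of the `N` distinct evaluation points, with `2(h+e) < N`,
then any solution `(a′, b′)` of the degree-`(h+e)` interpolation system satisfies
`a′/b′ = a/b`, i.e. `a′·b = a·b′`. -/
theorem stmt_1 {k : Type*} [Field k] (N : ℕ) (hN : 0 < N)
    (x : Fin N → k) (hx : Function.Injective x)
    (w : Fin N → Option k) (h e : ℕ) (hhe : 2 * (h + e) < N)
    (a b : Polynomial k) (hb : b ≠ 0)
    (hadeg : a.natDegree ≤ h) (hbdeg : b.natDegree ≤ h)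
    (S : Finset (Fin N)) (hS : S.card ≤ e)
    (hagree : ∀ i ∉ S,
      (∀ c : k, w i = some c →
        b.eval (x i) ≠ 0 ∧ a.eval (x i) = c * b.eval (x i)) ∧
      (w i = none → b.eval (x i) = 0))
    (a' b' : Polynomial k) (ha' : a'.natDegree ≤ h + e) (hb' : b'.natDegree ≤ h + e)
    (hinterp : ∀ i : Fin N,
      (∀ c : k, w i = some c → a'.eval (x i) = c * b'.eval (x i)) ∧
      (w i = none → b'.eval (x i) = 0)) :
    a' * b = a * b' := by
  classical
  have key : a' * b - a * b' = 0 := by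
    apply Polynomial.eq_zero_of_natDegree_lt_card_of_eval_eq_zero'
      (a' * b - a * b') (Sᶜ.image x)
    · intro y hy
      obtain ⟨i, hi, rfl⟩ := Finset.mem_image.mp hy
      have hi' : i ∉ S := Finset.mem_compl.mp hi
      obtain ⟨h1, h2⟩ := hagree i hi'
      obtain ⟨h1', h2'⟩ := hinterp i
      cases hw : w i with
      | none =>
        simp [h2 hw, h2' hw]
      | some c =>
        have := (h1 c hw).2
        have := h1' c hw
        simp only [Polynomial.eval_sub, Polynomial.eval_mul]
        rw [this, ‹a.eval (x i) = c * b.eval (x i)›]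
        ring
    · have hcard : (Sᶜ.image x).card = Sᶜ.card :=
        Finset.card_image_of_injective _ hx
      have hcompl : Sᶜ.card = N - S.card := by
        simp [Finset.card_compl]
      have hNe : N - e ≤ Sᶜ.card := by
        rw [hcompl]; omega
      have hdeg : (a' * b - a * b').natDegree < N - e := by
        have h1 : (a' * b).natDegree ≤ (h + e) + h :=
          le_trans (Polynomial.natDegree_mul_le) (add_le_add ha' hbdeg)
        have h2 : (a * b').natDegree ≤ h + (h + e) :=
          le_trans (Polynomial.natDegree_mul_le) (add_le_add hadeg hb')
        have := Polynomial.natDegree_sub_le (a' * b) (a * b')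
        omega
      omega
  exact sub_eq_zero.mp key
end

section
/- Let k be a finite field with q elements and h a natural number. Then the number of rational functions f ∈ k(X) (including the zero function) of degree at most h is exactly q^{2h+1}. -/
open Polynomial
open scoped Classical

namespace Stmt2Aux

variable {k : Type*} [Field k] [Fintype k]

lemma setEq_degLT (n : ℕ) :
    {p : k[X] | p.degree < (n : ℕ)} = (Polynomial.degreeLT k n : Set k[X]) := by
  ext p; simp [Polynomial.mem_degreeLT]

lemma finite_degLT (n : ℕ) : {p : k[X] | p.degree < (n : ℕ)}.Finite := by
  rw [setEq_degLT]
  have : Finite (Polynomial.degreeLT k n) :=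
    Finite.of_equiv _ (Polynomial.degreeLTEquiv k n).toEquiv.symm
  exact Set.finite_coe_iff.mp this

lemma ncard_degLT (n : ℕ) :
    {p : k[X] | p.degree < (n : ℕ)}.ncard = Fintype.card k ^ n := by
  rw [setEq_degLT, ← Nat.card_coe_set_eq]
  have : Nat.card (Polynomial.degreeLT k n) = Fintype.card k ^ n := by
    rw [Nat.card_congr (Polynomial.degreeLTEquiv k n).toEquiv, Nat.card_eq_fintype_card]
    simp
  exact this

lemma setEq_degLE (n : ℕ) :
    {p : k[X] | p.natDegree ≤ n} = {p : k[X] | p.degree < ((n + 1 : ℕ) : ℕ)} := by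
  ext p
  simp only [Set.mem_setOf_eq]
  by_cases hp : p = 0
  · subst hp
    constructor
    · intro _; rw [degree_zero]; exact bot_lt_iff_ne_bot.mpr (by simp)
    · intro _; simp
  · rw [← Polynomial.natDegree_lt_iff_degree_lt hp]
    exact Nat.lt_succ_iff.symm

lemma finite_degLE (n : ℕ) : {p : k[X] | p.natDegree ≤ n}.Finite := by
  rw [setEq_degLE]; exact finite_degLT (n + 1)

lemma ncard_degLE (n : ℕ) :
    {p : k[X] | p.natDegree ≤ n}.ncard = Fintype.card k ^ (n + 1) := by
  rw [setEq_degLE]; exact ncard_degLT (n + 1)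

lemma monicEq_eq_image (e : ℕ) :
    {p : k[X] | p.Monic ∧ p.natDegree = e}
      = (fun p => X ^ e + p) '' {p : k[X] | p.degree < (e : ℕ)} := by
  ext p
  constructor
  · rintro ⟨hm, hd⟩
    refine ⟨p - X ^ e, ?_, by ring⟩
    have h1 : p.degree = (X ^ e : k[X]).degree := by
      rw [degree_X_pow, Polynomial.degree_eq_natDegree hm.ne_zero, hd]
    have := Polynomial.degree_sub_lt h1 hm.ne_zero
      (by rw [hm.leadingCoeff, Polynomial.leadingCoeff_X_pow])
    simpa [Polynomial.degree_eq_natDegree hm.ne_zero, hd] using this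
  · rintro ⟨r, hr, rfl⟩
    have hm : (X ^ e + r : k[X]).Monic := Polynomial.monic_X_pow_add hr
    refine ⟨hm, ?_⟩
    have hdeg : (X ^ e + r : k[X]).degree = (e : ℕ) := by
      rw [Polynomial.degree_add_eq_left_of_degree_lt (by simpa [degree_X_pow] using hr),
        degree_X_pow]
    exact Polynomial.natDegree_eq_of_degree_eq_some hdeg

lemma finite_monicEq (e : ℕ) : {p : k[X] | p.Monic ∧ p.natDegree = e}.Finite := by
  rw [monicEq_eq_image]; exact (finite_degLT e).image _

lemma ncard_monicEq (e : ℕ) :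
    {p : k[X] | p.Monic ∧ p.natDegree = e}.ncard = Fintype.card k ^ e := by
  rw [monicEq_eq_image, Set.ncard_image_of_injective _ (add_right_injective _), ncard_degLT]

lemma ncard_prod {α β : Type*} (s : Set α) (t : Set β) :
    (s ×ˢ t).ncard = s.ncard * t.ncard := by
  rw [← Nat.card_coe_set_eq, ← Nat.card_coe_set_eq, ← Nat.card_coe_set_eq,
    Nat.card_congr (Equiv.Set.prod s t), Nat.card_prod]

lemma ncard_biUnion {α : Type*} {T : ℕ → Set α}
    (hd : ∀ i j, i ≠ j → Disjoint (T i) (T j)) (hf : ∀ i, (T i).Finite) (n : ℕ) :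
    (⋃ i ∈ Finset.range n, T i).ncard = ∑ i ∈ Finset.range n, (T i).ncard := by
  induction n with
  | zero => simp
  | succ n ih =>
    have hU : (⋃ i ∈ Finset.range (n + 1), T i) = (⋃ i ∈ Finset.range n, T i) ∪ T n := by
      ext x
      simp only [Set.mem_iUnion, Finset.mem_range, Set.mem_union]
      constructor
      · rintro ⟨i, hi, hx⟩
        rcases Nat.lt_succ_iff_lt_or_eq.mp hi with hi | rfl
        · exact Or.inl ⟨i, hi, hx⟩
        · exact Or.inr hx
      · rintro (⟨i, hi, hx⟩ | hx)
        · exact ⟨i, Nat.lt_succ_of_lt hi, hx⟩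
        · exact ⟨n, Nat.lt_succ_self n, hx⟩
    rw [hU, Set.ncard_union_eq ?_ ?_ (hf n), ih, Finset.sum_range_succ]
    · exact Set.disjoint_iUnion₂_left.mpr fun i hi =>
        hd i n (Nat.ne_of_lt (Finset.mem_range.mp hi))
    · exact Set.Finite.biUnion (Finset.range n).finite_toSet fun i _ => hf i

/-- The set of coprime pairs `(a, b)` with `b` monic and both degrees at most `m`. -/
def NS (k : Type*) [Field k] (m : ℕ) : Set (k[X] × k[X]) :=
  {x | x.2.Monic ∧ IsCoprime x.1 x.2 ∧ x.1.natDegree ≤ m ∧ x.2.natDegree ≤ m}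

lemma finite_NS (m : ℕ) : (NS k m).Finite := by
  refine ((finite_degLE m).prod (finite_degLE m)).subset ?_
  rintro ⟨a, b⟩ ⟨-, -, h1, h2⟩
  exact ⟨h1, h2⟩

lemma gcd_mul_coprime {g a b : k[X]} (hg : g.Monic) (hco : IsCoprime a b) :
    gcd (g * a) (g * b) = g := by
  have h1 : gcd a b = 1 := by
    rw [← normalize_gcd]
    exact normalize_eq_one.mpr ((gcd_isUnit_iff a b).mpr hco)
  rw [gcd_mul_left, h1, mul_one, hg.normalize_eq_self]

lemma key (h : ℕ) :
    {x : k[X] × k[X] | x.2.Monic ∧ x.1.natDegree ≤ h ∧ x.2.natDegree ≤ h}.ncard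
      = ∑ e ∈ Finset.range (h + 1), Fintype.card k ^ e * (NS k (h - e)).ncard := by
  classical
  set T : ℕ → Set (k[X] × (k[X] × k[X])) :=
    fun e => {g : k[X] | g.Monic ∧ g.natDegree = e} ×ˢ NS k (h - e) with hT
  set ψ : k[X] × (k[X] × k[X]) → k[X] × k[X] := fun x => (x.1 * x.2.1, x.1 * x.2.2) with hψ
  have hTdisj : ∀ i j, i ≠ j → Disjoint (T i) (T j) := by
    intro i j hij
    rw [Set.disjoint_left]
    rintro ⟨g, a, b⟩ ⟨⟨-, h1⟩, -⟩ ⟨⟨-, h2⟩, -⟩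
    exact hij (h1 ▸ h2 ▸ rfl)
  have hTfin : ∀ i, (T i).Finite := fun i => (finite_monicEq i).prod (finite_NS _)
  have himg : ψ '' (⋃ e ∈ Finset.range (h + 1), T e)
      = {x : k[X] × k[X] | x.2.Monic ∧ x.1.natDegree ≤ h ∧ x.2.natDegree ≤ h} := by
    ext ⟨a, b⟩
    constructor
    · rintro ⟨⟨g, a', b'⟩, hmem, heq⟩
      simp only [Set.mem_iUnion, Finset.mem_range] at hmem
      obtain ⟨e, he, ⟨hgm, hge⟩, hb'm, hco, hda', hdb'⟩ := hmem
      injection heq with h1 h2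
      subst h1; subst h2
      have he' : e ≤ h := Nat.lt_succ_iff.mp he
      have hda2 : a'.natDegree ≤ h - e := hda'
      have hdb2 : b'.natDegree ≤ h - e := hdb'
      refine ⟨hgm.mul hb'm, ?_, ?_⟩
      · by_cases ha : a' = 0
        · simp [ha]
        · rw [Polynomial.natDegree_mul hgm.ne_zero ha, hge]; omega
      · rw [Polynomial.natDegree_mul hgm.ne_zero hb'm.ne_zero, hge]; omega
    · rintro ⟨hbm, had, hbd⟩
      replace hbm : b.Monic := hbm
      replace had : a.natDegree ≤ h := had
      replace hbd : b.natDegree ≤ h := hbd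
      have hb0 : b ≠ 0 := hbm.ne_zero
      set g := gcd a b with hg
      have hg0 : g ≠ 0 := fun hz => hb0 ((gcd_eq_zero_iff a b).mp hz).2
      have hgm : g.Monic := by
        have := Polynomial.monic_normalize (p := g) hg0
        rwa [hg, normalize_gcd] at this
      obtain ⟨a', ha'⟩ := gcd_dvd_left a b
      obtain ⟨b', hb'⟩ := gcd_dvd_right a b
      have ha2 : a = g * a' := by rw [hg]; exact ha'
      have hb2 : b = g * b' := by rw [hg]; exact hb'
      have hb'0 : b' ≠ 0 := fun hz => hb0 (by rw [hb2, hz, mul_zero])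
      have hb'm : b'.Monic := hgm.of_mul_monic_left (by rwa [← hb2])
      have hco : IsCoprime a' b' := by
        have hgab : gcd (g * a') (g * b') = gcd a b := by rw [← ha2, ← hb2]
        have h2 : normalize g * gcd a' b' = g := by rw [← gcd_mul_left, hgab, ← hg]
        rw [hgm.normalize_eq_self] at h2
        have h3 : gcd a' b' = 1 := mul_left_cancel₀ hg0 (by rw [h2, mul_one])
        exact (gcd_isUnit_iff a' b').mp (by rw [h3]; exact isUnit_one)
      have hdb : b.natDegree = g.natDegree + b'.natDegree := by
        rw [hb2, Polynomial.natDegree_mul hg0 hb'0]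
      have hda' : a'.natDegree ≤ h - g.natDegree := by
        by_cases ha0 : a' = 0
        · simp [ha0]
        · have hda : a.natDegree = g.natDegree + a'.natDegree := by
            rw [ha2, Polynomial.natDegree_mul hg0 ha0]
          omega
      have hdb' : b'.natDegree ≤ h - g.natDegree := by omega
      refine ⟨(g, (a', b')), ?_, ?_⟩
      · simp only [Set.mem_iUnion, Finset.mem_range]
        exact ⟨g.natDegree, by omega, ⟨⟨hgm, rfl⟩, hb'm, hco, hda', hdb'⟩⟩
      · simp only [hψ]
        rw [← ha2, ← hb2]
  have hinj : Set.InjOn ψ (⋃ e ∈ Finset.range (h + 1), T e) := by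
    rintro ⟨g, a, b⟩ hx ⟨g', a', b'⟩ hy heq
    simp only [Set.mem_iUnion, Finset.mem_range] at hx hy
    obtain ⟨e, -, ⟨hgm, -⟩, -, hco, -, -⟩ := hx
    obtain ⟨e', -, ⟨hgm', -⟩, -, hco', -, -⟩ := hy
    injection heq with h1 h2
    have hgg : g = g' := by
      have e1 : gcd (g * a) (g * b) = g := gcd_mul_coprime hgm hco
      have e2 : gcd (g' * a') (g' * b') = g' := gcd_mul_coprime hgm' hco'
      rw [← e1, h1, h2, e2]
    subst hgg
    have ha : a = a' := mul_left_cancel₀ hgm.ne_zero h1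
    have hb : b = b' := mul_left_cancel₀ hgm.ne_zero h2
    rw [ha, hb]
  rw [← himg, Set.ncard_image_of_injOn hinj, ncard_biUnion hTdisj hTfin]
  exact Finset.sum_congr rfl fun e _ => by rw [hT, ncard_prod, ncard_monicEq]

lemma finite_monicLE (n : ℕ) : {b : k[X] | b.Monic ∧ b.natDegree ≤ n}.Finite :=
  (finite_degLE n).subset fun b hb => hb.2

lemma ncard_monicLE (n : ℕ) :
    {b : k[X] | b.Monic ∧ b.natDegree ≤ n}.ncard
      = ∑ e ∈ Finset.range (n + 1), Fintype.card k ^ e := by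
  have hU : {b : k[X] | b.Monic ∧ b.natDegree ≤ n}
      = ⋃ e ∈ Finset.range (n + 1), {p : k[X] | p.Monic ∧ p.natDegree = e} := by
    ext b
    simp only [Set.mem_iUnion, Finset.mem_range, Set.mem_setOf_eq]
    constructor
    · rintro ⟨hm, hd⟩; exact ⟨b.natDegree, Nat.lt_succ_of_le hd, hm, rfl⟩
    · rintro ⟨e, he, hm, rfl⟩; exact ⟨hm, Nat.lt_succ_iff.mp he⟩
  rw [hU, ncard_biUnion ?_ (fun i => finite_monicEq i)]
  · exact Finset.sum_congr rfl fun e _ => ncard_monicEq e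
  · intro i j hij
    rw [Set.disjoint_left]
    rintro p ⟨-, h1⟩ ⟨-, h2⟩
    exact hij (h1 ▸ h2 ▸ rfl)

lemma ncard_A (h : ℕ) :
    {x : k[X] × k[X] | x.2.Monic ∧ x.1.natDegree ≤ h ∧ x.2.natDegree ≤ h}.ncard
      = ∑ e ∈ Finset.range (h + 1), Fintype.card k ^ (h + 1 + e) := by
  have hA : {x : k[X] × k[X] | x.2.Monic ∧ x.1.natDegree ≤ h ∧ x.2.natDegree ≤ h}
      = {a : k[X] | a.natDegree ≤ h} ×ˢ {b : k[X] | b.Monic ∧ b.natDegree ≤ h} := by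
    ext ⟨a, b⟩
    simp only [Set.mem_setOf_eq, Set.mem_prod]
    tauto
  rw [hA, ncard_prod, ncard_degLE, ncard_monicLE, Finset.mul_sum]
  exact Finset.sum_congr rfl fun e _ => (pow_add _ _ _).symm

lemma NS_ncard (m : ℕ) : (NS k m).ncard = Fintype.card k ^ (2 * m + 1) := by
  induction m using Nat.strong_induction_on with
  | _ h IH =>
  have H : ∑ e ∈ Finset.range (h + 1), Fintype.card k ^ e * (NS k (h - e)).ncard
      = ∑ e ∈ Finset.range (h + 1), Fintype.card k ^ (h + 1 + e) := by
    rw [← key, ncard_A]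
  rw [Finset.sum_range_succ'] at H
  have L : ∑ e ∈ Finset.range h, Fintype.card k ^ (e + 1) * (NS k (h - (e + 1))).ncard
      = ∑ e ∈ Finset.range h, Fintype.card k ^ (2 * h - e) := by
    refine Finset.sum_congr rfl fun e he => ?_
    have he' : e < h := Finset.mem_range.mp he
    rw [IH (h - (e + 1)) (by omega), ← pow_add]
    congr 1
    omega
  have R : ∑ e ∈ Finset.range (h + 1), Fintype.card k ^ (h + 1 + e)
      = (∑ e ∈ Finset.range h, Fintype.card k ^ (2 * h - e))
          + Fintype.card k ^ (2 * h + 1) := by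
    rw [← Finset.sum_range_reflect (fun j => Fintype.card k ^ (h + 1 + j)) (h + 1),
      Finset.sum_range_succ']
    congr 1
    · refine Finset.sum_congr rfl fun e he => ?_
      have he' : e < h := Finset.mem_range.mp he
      congr 1
      omega
    · congr 1
      omega
  rw [L, R] at H
  have := Nat.add_left_cancel H
  simpa using this

lemma num_denom_eq {a b : k[X]} (hb : b.Monic) (hco : IsCoprime a b) :
    (algebraMap k[X] (RatFunc k) a / algebraMap k[X] (RatFunc k) b).num = a ∧
    (algebraMap k[X] (RatFunc k) a / algebraMap k[X] (RatFunc k) b).denom = b := by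
  set f := algebraMap k[X] (RatFunc k) a / algebraMap k[X] (RatFunc k) b with hf
  have hb0 : b ≠ 0 := hb.ne_zero
  have hcross : f.num * b = a * f.denom := by
    have h1 : algebraMap k[X] (RatFunc k) f.num / algebraMap k[X] (RatFunc k) f.denom
        = algebraMap k[X] (RatFunc k) a / algebraMap k[X] (RatFunc k) b := by
      rw [RatFunc.num_div_denom]
    rw [div_eq_div_iff (RatFunc.algebraMap_ne_zero (RatFunc.denom_ne_zero f))
      (RatFunc.algebraMap_ne_zero hb0), ← map_mul, ← map_mul] at h1
    exact RatFunc.algebraMap_injective k h1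
  have hd1 : f.denom ∣ b := by rw [hf]; exact RatFunc.denom_div_dvd a b
  have hd2 : b ∣ f.denom := by
    refine hco.symm.dvd_of_dvd_mul_left ?_
    exact ⟨f.num, by rw [← hcross]; exact mul_comm _ _⟩
  have hdenom : f.denom = b :=
    Polynomial.eq_of_monic_of_associated (RatFunc.monic_denom f) hb
      (associated_of_dvd_dvd hd1 hd2)
  refine ⟨?_, hdenom⟩
  rw [hdenom] at hcross
  exact mul_right_cancel₀ hb0 hcross

end Stmt2Aux

/-- Over a finite field `k` with `q` elements, the number of rational functions
`f ∈ k(X)` of degree at most `h` is exactly `q^(2h+1)`, where the degree of `f`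
is `max (deg (num f)) (deg (denom f))`. -/
theorem stmt_2 {k : Type*} [Field k] [Fintype k] (h : ℕ) :
    {f : RatFunc k | max f.num.natDegree f.denom.natDegree ≤ h}.ncard
      = Fintype.card k ^ (2 * h + 1) := by
  classical
  have himg : (fun f : RatFunc k => (f.num, f.denom)) ''
      {f : RatFunc k | max f.num.natDegree f.denom.natDegree ≤ h} = Stmt2Aux.NS k h := by
    ext ⟨a, b⟩
    constructor
    · rintro ⟨f, hf, heq⟩
      injection heq with h1 h2
      subst h1; subst h2
      replace hf : max f.num.natDegree f.denom.natDegree ≤ h := hf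
      exact ⟨RatFunc.monic_denom f, RatFunc.isCoprime_num_denom f,
        le_trans (le_max_left _ _) hf, le_trans (le_max_right _ _) hf⟩
    · rintro ⟨hbm, hco, h1, h2⟩
      replace hbm : b.Monic := hbm
      replace hco : IsCoprime a b := hco
      replace h1 : a.natDegree ≤ h := h1
      replace h2 : b.natDegree ≤ h := h2
      obtain ⟨hnum, hden⟩ := Stmt2Aux.num_denom_eq hbm hco
      refine ⟨algebraMap k[X] (RatFunc k) a / algebraMap k[X] (RatFunc k) b, ?_, ?_⟩
      · show max _ _ ≤ h
        rw [hnum, hden]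
        exact max_le h1 h2
      · simp only [hnum, hden]
  have hinj : Set.InjOn (fun f : RatFunc k => (f.num, f.denom))
      {f : RatFunc k | max f.num.natDegree f.denom.natDegree ≤ h} := by
    intro f _ f' _ heq
    injection heq with h1 h2
    rw [← RatFunc.num_div_denom f, ← RatFunc.num_div_denom f', h1, h2]
  have hcard := Set.ncard_image_of_injOn hinj
  rw [himg] at hcard
  rw [← hcard, Stmt2Aux.NS_ncard]
end

section
/- Let k be a finite field with q elements and h a positive integer. Then the number of rational functions f ∈ k(X) of degree exactly h is q^{2h+1} − q^{2h−1}. -/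
open Polynomial Finset
open scoped Classical

set_option linter.unusedSectionVars false
set_option maxHeartbeats 1000000

namespace Stmt3Aux

variable {k : Type*} [Field k]

/-- coprime pairs (num, denom) with monic denominator and exact max degree `j` -/
def S (k : Type*) [Field k] (j : ℕ) : Set (k[X] × k[X]) :=
  {ab | ab.2.Monic ∧ IsCoprime ab.1 ab.2 ∧ max ab.1.natDegree ab.2.natDegree = j}

/-- all pairs with monic second component and exact max degree `m` -/
def P (k : Type*) [Field k] (m : ℕ) : Set (k[X] × k[X]) :=
  {ab | ab.2.Monic ∧ max ab.1.natDegree ab.2.natDegree = m}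

/-- all pairs with monic second component and max degree ≤ `m` -/
def Ple (k : Type*) [Field k] (m : ℕ) : Set (k[X] × k[X]) :=
  {ab | ab.2.Monic ∧ max ab.1.natDegree ab.2.natDegree ≤ m}

/-- monic polynomials of exact degree `d` -/
def Mon (k : Type*) [Field k] (d : ℕ) : Set k[X] := {p | p.Monic ∧ p.natDegree = d}

/-- monic polynomials of degree ≤ m -/
def MLE (k : Type*) [Field k] (m : ℕ) : Set k[X] := {p | p.Monic ∧ p.natDegree ≤ m}

/-- polynomials of degree ≤ m -/
def DLE (k : Type*) [Field k] (m : ℕ) : Set k[X] := {p | p.natDegree ≤ m}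

/-- multiplication by a common factor -/
noncomputable def mul2 : k[X] × (k[X] × k[X]) → k[X] × k[X] :=
  fun x => (x.1 * x.2.1, x.1 * x.2.2)

lemma DLE_eq (m : ℕ) : DLE k m = ↑(degreeLT k (m + 1)) := by
  ext p
  simp only [DLE, Set.mem_setOf_eq, SetLike.mem_coe, mem_degreeLT]
  rcases eq_or_ne p 0 with rfl | hp
  · simp [bot_lt_iff_ne_bot]
  · rw [← natDegree_lt_iff_degree_lt hp]
    omega

lemma Mon_eq (d : ℕ) :
    Mon k d = (fun r : k[X] => X ^ d + r) '' ↑(degreeLT k d) := by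
  ext p
  simp only [Mon, Set.mem_setOf_eq, Set.mem_image, SetLike.mem_coe, mem_degreeLT]
  constructor
  · rintro ⟨hp, rfl⟩
    refine ⟨p - X ^ p.natDegree, ?_, by ring⟩
    have h1 : p.degree = (X ^ p.natDegree : k[X]).degree := by
      rw [degree_X_pow, degree_eq_natDegree hp.ne_zero]
    have := degree_sub_lt h1 hp.ne_zero (by simp [hp.leadingCoeff])
    rwa [degree_eq_natDegree hp.ne_zero] at this
  · rintro ⟨r, hr, rfl⟩
    have hlt : r.degree < (X ^ d : k[X]).degree := by rwa [degree_X_pow]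
    have hm : (X ^ d + r).Monic := (monic_X_pow d).add_of_left hlt
    refine ⟨hm, ?_⟩
    have := degree_add_eq_left_of_degree_lt hlt
    rw [degree_X_pow] at this
    exact natDegree_eq_of_degree_eq_some this

variable [Fintype k]

lemma finite_DLE (m : ℕ) : (DLE k m).Finite := by
  rw [DLE_eq]
  have : Finite (degreeLT k (m + 1)) :=
    Finite.of_equiv _ (degreeLTEquiv k (m + 1)).toEquiv.symm
  exact (degreeLT k (m + 1) : Set k[X]).toFinite

lemma ncard_DLE (m : ℕ) : (DLE k m).ncard = Fintype.card k ^ (m + 1) := by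
  rw [DLE_eq]
  have : (↑(degreeLT k (m + 1)) : Set k[X]).ncard = Nat.card (degreeLT k (m + 1)) := rfl
  rw [this, Nat.card_congr (degreeLTEquiv k (m + 1)).toEquiv]
  simp [Nat.card_eq_fintype_card]

lemma finite_Mon (d : ℕ) : (Mon k d).Finite := by
  rw [Mon_eq]
  refine Set.Finite.image _ ?_
  have : Finite (degreeLT k d) := Finite.of_equiv _ (degreeLTEquiv k d).toEquiv.symm
  exact (degreeLT k d : Set k[X]).toFinite

lemma ncard_Mon (d : ℕ) : (Mon k d).ncard = Fintype.card k ^ d := by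
  rw [Mon_eq, Set.ncard_image_of_injective _ (add_right_injective _)]
  have : (↑(degreeLT k d) : Set k[X]).ncard = Nat.card (degreeLT k d) := rfl
  rw [this, Nat.card_congr (degreeLTEquiv k d).toEquiv]
  simp [Nat.card_eq_fintype_card]

lemma MLE_zero : MLE k 0 = Mon k 0 := by
  ext p; simp [MLE, Mon, Nat.le_zero]

lemma MLE_succ (m : ℕ) : MLE k (m + 1) = MLE k m ∪ Mon k (m + 1) := by
  ext p
  simp only [MLE, Mon, Set.mem_setOf_eq, Set.mem_union]
  constructor
  · rintro ⟨hp, hd⟩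
    rcases Nat.lt_or_ge p.natDegree (m + 1) with h | h
    · exact Or.inl ⟨hp, by omega⟩
    · exact Or.inr ⟨hp, by omega⟩
  · rintro (⟨hp, hd⟩ | ⟨hp, hd⟩) <;> exact ⟨hp, by omega⟩

lemma finite_MLE (m : ℕ) : (MLE k m).Finite :=
  (finite_DLE m).subset fun p hp => hp.2

lemma ncard_MLE_succ (m : ℕ) :
    (MLE k (m + 1)).ncard = (MLE k m).ncard + Fintype.card k ^ (m + 1) := by
  rw [MLE_succ, Set.ncard_union_eq ?_ (finite_MLE m) (finite_Mon (m + 1)), ncard_Mon]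
  rw [Set.disjoint_left]
  rintro p ⟨_, h1⟩ ⟨_, h2⟩
  omega

lemma ncard_MLE_zero : (MLE k 0).ncard = 1 := by
  rw [MLE_zero, ncard_Mon, pow_zero]

/-- ncard of a set product -/
lemma ncard_prod {α β : Type*} (s : Set α) (t : Set β) :
    (s ×ˢ t).ncard = s.ncard * t.ncard := by
  have : (s ×ˢ t).ncard = Nat.card ↥(s ×ˢ t) := rfl
  rw [this, Nat.card_congr (Equiv.Set.prod s t), Nat.card_prod]
  rfl

lemma Ple_eq_prod (m : ℕ) : Ple k m = DLE k m ×ˢ MLE k m := by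
  ext ⟨a, b⟩
  simp only [Ple, DLE, MLE, Set.mem_setOf_eq, Set.mem_prod]
  constructor
  · rintro ⟨hb, hd⟩
    exact ⟨by omega, hb, by omega⟩
  · rintro ⟨ha, hb, hd⟩
    exact ⟨hb, by omega⟩

lemma finite_Ple (m : ℕ) : (Ple k m).Finite := by
  rw [Ple_eq_prod]; exact (finite_DLE m).prod (finite_MLE m)

lemma finite_P (m : ℕ) : (P k m).Finite :=
  (finite_Ple m).subset fun ab hab => ⟨hab.1, le_of_eq hab.2⟩

lemma finite_S (j : ℕ) : (S k j).Finite :=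
  (finite_P j).subset fun ab hab => ⟨hab.1, hab.2.2⟩

lemma ncard_Ple (m : ℕ) :
    (Ple k m).ncard = Fintype.card k ^ (m + 1) * (MLE k m).ncard := by
  rw [Ple_eq_prod, ncard_prod, ncard_DLE]

lemma Ple_zero : Ple k 0 = P k 0 := by
  ext ⟨a, b⟩
  simp only [Ple, P, Set.mem_setOf_eq, Nat.le_zero]

lemma Ple_succ (m : ℕ) : Ple k (m + 1) = Ple k m ∪ P k (m + 1) := by
  ext ⟨a, b⟩
  simp only [Ple, P, Set.mem_setOf_eq, Set.mem_union]
  constructor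
  · rintro ⟨hb, hd⟩
    rcases Nat.lt_or_ge (max a.natDegree b.natDegree) (m + 1) with h | h
    · exact Or.inl ⟨hb, by omega⟩
    · exact Or.inr ⟨hb, by omega⟩
  · rintro (⟨hb, hd⟩ | ⟨hb, hd⟩) <;> exact ⟨hb, by omega⟩

lemma ncard_Ple_succ (m : ℕ) :
    (Ple k (m + 1)).ncard = (Ple k m).ncard + (P k (m + 1)).ncard := by
  rw [Ple_succ, Set.ncard_union_eq ?_ (finite_Ple m) (finite_P (m + 1))]
  rw [Set.disjoint_left]
  rintro ⟨a, b⟩ ⟨_, h1⟩ ⟨_, h2⟩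
  omega

lemma gcd_coprime {a b : k[X]} (h : IsCoprime a b) : gcd a b = 1 := by
  rw [← _root_.normalize_gcd, normalize_eq_one]
  exact h.isUnit_of_dvd' (gcd_dvd_left a b) (gcd_dvd_right a b)

lemma gcd_mul2 {g a b : k[X]} (hg : g.Monic) (hcop : IsCoprime a b) :
    gcd (g * a) (g * b) = g := by
  rw [_root_.gcd_mul_left, gcd_coprime hcop, mul_one, hg.normalize_eq_self]

lemma max_deg_mul {g a b : k[X]} (hg : g ≠ 0) (hb : b ≠ 0) :
    max (g * a).natDegree (g * b).natDegree = g.natDegree + max a.natDegree b.natDegree := by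
  rcases eq_or_ne a 0 with rfl | ha
  · simp [natDegree_mul hg hb]
  · rw [natDegree_mul hg ha, natDegree_mul hg hb, max_add_add_left]

lemma mul2_injOn (d j : ℕ) : Set.InjOn (mul2 (k := k)) (Mon k d ×ˢ S k j) := by
  rintro ⟨g, a, b⟩ ⟨⟨hg, -⟩, hb, hcop, -⟩ ⟨g', a', b'⟩ ⟨⟨hg', -⟩, hb', hcop', -⟩ heq
  simp only [mul2, Prod.mk.injEq] at heq
  obtain ⟨h1, h2⟩ := heq
  have hgg : g = g' := by
    have e1 : gcd (g * a) (g * b) = g := gcd_mul2 hg hcop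
    have e2 : gcd (g' * a') (g' * b') = g' := gcd_mul2 hg' hcop'
    rw [h1, h2, e2] at e1
    exact e1.symm
  subst hgg
  have hg0 : g ≠ 0 := hg.ne_zero
  simp only [Prod.mk.injEq]
  exact ⟨trivial, mul_left_cancel₀ hg0 h1, mul_left_cancel₀ hg0 h2⟩

lemma gcd_of_mem_image {d j : ℕ} {x : k[X] × k[X]}
    (hx : x ∈ mul2 '' (Mon k d ×ˢ S k j)) : (gcd x.1 x.2).natDegree = d := by
  obtain ⟨⟨g, a, b⟩, ⟨⟨hg, hgd⟩, hb, hcop, -⟩, rfl⟩ := hx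
  simp only [mul2]
  rw [gcd_mul2 hg hcop]
  exact hgd

lemma P_eq_biUnion (m : ℕ) :
    P k m = ⋃ d ∈ range (m + 1), mul2 '' (Mon k d ×ˢ S k (m - d)) := by
  ext ⟨a, b⟩
  simp only [P, Set.mem_setOf_eq, Set.mem_iUnion, Set.mem_image, mem_range, Set.mem_prod]
  constructor
  · rintro ⟨hb, hdeg⟩
    have hb0 : b ≠ 0 := hb.ne_zero
    have hg0 : gcd a b ≠ 0 := gcd_ne_zero_of_right hb0
    set g := gcd a b with hgdef
    have hgm : g.Monic := by
      rw [hgdef, ← _root_.normalize_gcd]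
      exact monic_normalize hg0
    have hga : g * (a / g) = a := EuclideanDomain.mul_div_cancel' hg0 (gcd_dvd_left a b)
    have hgb : g * (b / g) = b := EuclideanDomain.mul_div_cancel' hg0 (gcd_dvd_right a b)
    have hb'0 : b / g ≠ 0 := right_div_gcd_ne_zero hb0
    have hb'm : (b / g).Monic := by
      have : (g * (b / g)).Monic := by rwa [hgb]
      exact hgm.of_mul_monic_left this
    have hcop : IsCoprime (a / g) (b / g) := isCoprime_div_gcd_div_gcd hb0
    have hdg : g.natDegree ≤ m := by
      have h1 : g.natDegree ≤ b.natDegree := natDegree_le_of_dvd (gcd_dvd_right a b) hb0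
      omega
    have hmax : g.natDegree + max (a / g).natDegree (b / g).natDegree = m := by
      rw [← max_deg_mul hg0 hb'0, hga, hgb]; exact hdeg
    have hfin : max (a / g).natDegree (b / g).natDegree = m - g.natDegree := by omega
    refine ⟨g.natDegree, by omega, ⟨g, a / g, b / g⟩, ⟨⟨hgm, rfl⟩, hb'm, hcop, hfin⟩, ?_⟩
    simp only [mul2, hga, hgb]
  · rintro ⟨d, hd, ⟨g, a', b'⟩, ⟨⟨hgm, hgd⟩, hb'm, hcop, hmax⟩, heq⟩
    simp only [mul2, Prod.mk.injEq] at heq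
    obtain ⟨rfl, rfl⟩ := heq
    refine ⟨hgm.mul hb'm, ?_⟩
    rw [max_deg_mul hgm.ne_zero hb'm.ne_zero, hgd, hmax]
    omega

lemma ncard_biUnion {α : Type*} (n : ℕ) (A : ℕ → Set α)
    (hfin : ∀ i, (A i).Finite)
    (hdisj : ∀ i j, i ≠ j → Disjoint (A i) (A j)) :
    (⋃ i ∈ range n, A i).ncard = ∑ i ∈ range n, (A i).ncard := by
  induction n with
  | zero => simp
  | succ n ih =>
    rw [Finset.sum_range_succ, ← ih, Finset.range_add_one]
    rw [Finset.set_biUnion_insert, Set.union_comm]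
    have hfinU : (⋃ i ∈ range n, A i).Finite :=
      Set.Finite.biUnion (range n).finite_toSet fun i _ => hfin i
    have hdisjU : Disjoint (⋃ i ∈ range n, A i) (A n) := by
      rw [Set.disjoint_left]
      rintro x hx hxn
      simp only [Set.mem_iUnion, mem_range] at hx
      obtain ⟨i, hi, hxi⟩ := hx
      exact Set.disjoint_left.1 (hdisj i n (by omega)) hxi hxn
    rw [Set.ncard_union_eq hdisjU hfinU (hfin n)]

lemma ncard_P (m : ℕ) :
    (P k m).ncard = ∑ d ∈ range (m + 1), Fintype.card k ^ d * (S k (m - d)).ncard := by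
  rw [P_eq_biUnion]
  rw [ncard_biUnion (m + 1) (fun d => mul2 '' (Mon k d ×ˢ S k (m - d)))
    (fun d => (((finite_Mon d).prod (finite_S (m - d))).image _))
    (fun i j hij => ?_)]
  · refine Finset.sum_congr rfl fun d _ => ?_
    rw [Set.ncard_image_of_injOn (mul2_injOn d (m - d)), ncard_prod, ncard_Mon]
  · rw [Set.disjoint_left]
    intro x hx hx'
    exact hij ((gcd_of_mem_image hx).symm.trans (gcd_of_mem_image hx'))

lemma num_denom_of_coprime {a b : k[X]} (hcop : IsCoprime a b) (hb : b.Monic) :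
    (algebraMap k[X] (RatFunc k) a / algebraMap k[X] (RatFunc k) b).num = a ∧
    (algebraMap k[X] (RatFunc k) a / algebraMap k[X] (RatFunc k) b).denom = b := by
  have hg : gcd a b = 1 := gcd_coprime hcop
  constructor
  · rw [RatFunc.num_div, hg]
    simp [hb.leadingCoeff]
  · rw [RatFunc.denom_div a hb.ne_zero, hg]
    simp [hb.leadingCoeff]

lemma S_eq_image (h : ℕ) :
    S k h = (fun f : RatFunc k => (f.num, f.denom)) ''
      {f : RatFunc k | max f.num.natDegree f.denom.natDegree = h} := by
  ext ⟨a, b⟩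
  simp only [S, Set.mem_setOf_eq, Set.mem_image, Prod.mk.injEq]
  constructor
  · rintro ⟨hb, hcop, hmax⟩
    refine ⟨algebraMap k[X] (RatFunc k) a / algebraMap k[X] (RatFunc k) b, ?_, ?_, ?_⟩
    · obtain ⟨h1, h2⟩ := num_denom_of_coprime hcop hb
      rw [h1, h2]; exact hmax
    · exact (num_denom_of_coprime hcop hb).1
    · exact (num_denom_of_coprime hcop hb).2
  · rintro ⟨f, hf, rfl, rfl⟩
    exact ⟨f.monic_denom, f.isCoprime_num_denom, hf⟩

lemma ncard_ratfunc (h : ℕ) :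
    {f : RatFunc k | max f.num.natDegree f.denom.natDegree = h}.ncard = (S k h).ncard := by
  rw [S_eq_image]
  refine (Set.ncard_image_of_injOn ?_).symm
  intro f hf g hg heq
  simp only [Prod.mk.injEq] at heq
  rw [← f.num_div_denom, ← g.num_div_denom, heq.1, heq.2]

end Stmt3Aux

open Stmt3Aux in
/-- Over a finite field `k` with `q` elements, the number of rational functions
`f ∈ k(X)` of degree exactly `h ≥ 1` is `q^(2h+1) − q^(2h−1)`, where the degree
of `f` is `max (deg (num f)) (deg (denom f))`. -/
theorem stmt_3 {k : Type*} [Field k] [Fintype k] (h : ℕ) (hh : 1 ≤ h) :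
    {f : RatFunc k | max f.num.natDegree f.denom.natDegree = h}.ncard
      = Fintype.card k ^ (2 * h + 1) - Fintype.card k ^ (2 * h - 1) := by
  set q := Fintype.card k with hq
  rw [ncard_ratfunc]
  -- convolution recursion: T (m+1) = q * T m + N (m+1)
  have hTrec : ∀ m : ℕ, (P k (m + 1)).ncard
      = q * (P k m).ncard + (S k (m + 1)).ncard := by
    intro m
    rw [ncard_P (m + 1), ncard_P m, Finset.sum_range_succ', Finset.mul_sum]
    simp only [pow_zero, one_mul, Nat.sub_zero]
    congr 1
    refine Finset.sum_congr rfl fun i hi => ?_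
    have e : m + 1 - (i + 1) = m - i := by omega
    rw [e]; ring
  have hT0 : (P k 0).ncard = (S k 0).ncard := by
    rw [ncard_P 0]
    simp
  -- base values
  have hG0 : (MLE k 0).ncard = 1 := ncard_MLE_zero
  -- case split on h
  obtain ⟨m, rfl⟩ : ∃ m, h = m + 1 := ⟨h - 1, by omega⟩
  rcases Nat.eq_zero_or_pos m with rfl | hm
  · -- h = 1
    have e1 : (P k 1).ncard = q * (P k 0).ncard + (S k 1).ncard := hTrec 0
    have e2 : (Ple k 1).ncard = (Ple k 0).ncard + (P k 1).ncard := ncard_Ple_succ 0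
    have e3 : (Ple k 0).ncard = (P k 0).ncard := by rw [Ple_zero]
    have e4 : (Ple k 0).ncard = q ^ 1 * (MLE k 0).ncard := ncard_Ple 0
    have e5 : (Ple k 1).ncard = q ^ 2 * (MLE k 1).ncard := ncard_Ple 1
    have e6 : (MLE k 1).ncard = (MLE k 0).ncard + q ^ 1 := ncard_MLE_succ 0
    have key : (S k 1).ncard + q ^ 1 = q ^ 3 := by
      zify at e1 e2 e3 e4 e5 e6 hG0 ⊢
      linear_combination -e1 - e2 + (q : ℤ) * e3 - (1 + (q:ℤ)) * e4 + e5
        + (q:ℤ)^2 * e6 - (q:ℤ) * hG0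
    have : 2 * 1 + 1 = 3 := by norm_num
    rw [this]
    exact Nat.eq_sub_of_add_eq key
  · -- h = l + 2
    obtain ⟨l, rfl⟩ : ∃ l, m = l + 1 := ⟨m - 1, by omega⟩
    have e1 : (P k (l + 2)).ncard = q * (P k (l + 1)).ncard + (S k (l + 2)).ncard :=
      hTrec (l + 1)
    have e2 : (Ple k (l + 2)).ncard = (Ple k (l + 1)).ncard + (P k (l + 2)).ncard :=
      ncard_Ple_succ (l + 1)
    have e3 : (Ple k (l + 1)).ncard = (Ple k l).ncard + (P k (l + 1)).ncard :=
      ncard_Ple_succ l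
    have e4 : (Ple k (l + 2)).ncard = q ^ (l + 3) * (MLE k (l + 2)).ncard := ncard_Ple (l + 2)
    have e5 : (Ple k (l + 1)).ncard = q ^ (l + 2) * (MLE k (l + 1)).ncard := ncard_Ple (l + 1)
    have e6 : (Ple k l).ncard = q ^ (l + 1) * (MLE k l).ncard := ncard_Ple l
    have e7 : (MLE k (l + 2)).ncard = (MLE k (l + 1)).ncard + q ^ (l + 2) :=
      ncard_MLE_succ (l + 1)
    have e8 : (MLE k (l + 1)).ncard = (MLE k l).ncard + q ^ (l + 1) := ncard_MLE_succ l
    have key : (S k (l + 2)).ncard + q ^ (2 * l + 3) = q ^ (2 * l + 5) := by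
      zify at e1 e2 e3 e4 e5 e6 e7 e8 ⊢
      linear_combination -e1 - e2 + (q:ℤ) * e3 + e4 - (1 + (q:ℤ)) * e5 + (q:ℤ) * e6
        + (q:ℤ)^(l+3) * e7 - (q:ℤ)^(l+2) * e8
    have ea : 2 * (l + 1 + 1) + 1 = 2 * l + 5 := by omega
    have eb : 2 * (l + 1 + 1) - 1 = 2 * l + 3 := by omega
    rw [ea, eb]
    exact Nat.eq_sub_of_add_eq key
end

section
/- Let k be a field, K a field extension of k, h a natural number, and x₀ ∈ K an element algebraic over k whose minimal polynomial has degree 2h+1 and which generates K over k (i.e. K = k(x₀), the intermediate field generated by x₀ is all of K). Then for every y ∈ K there exist polynomials a, b ∈ k[X] with deg a ≤ h, deg b ≤ h, b ≠ 0, and y·b(x₀) = a(x₀); equivalently, y = a(x₀)/b(x₀). -/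
/-!
The map `(a, b) ↦ a(x₀) - y b(x₀)` on pairs of polynomials of degree `≤ h` goes from a
`k`-space of dimension `2h + 2` to `K = k(x₀)`, of dimension `2h + 1`, so it has a nonzero
kernel element `(a, b)`. If `b` were `0`, then `a(x₀) = 0` with `deg a ≤ h < deg (minpoly x₀)`,
forcing `a = 0` as well.
-/

open Polynomial IntermediateField Module

namespace Polynomial

theorem exists_degreeLT_mul_aeval_eq_aeval {k A : Type*} [Field k] [CommRing A] [Algebra k A]
    [FiniteDimensional k A] (x y : A) {m n : ℕ} (hdim : finrank k A < m + n) :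
    ∃ a ∈ degreeLT k m, ∃ b ∈ degreeLT k n, (a, b) ≠ 0 ∧ y * aeval x b = aeval x a := by
  let ev : k[X] →ₗ[k] A := (aeval x).toLinearMap
  let f : degreeLT k m × degreeLT k n →ₗ[k] A :=
    ev ∘ₗ (degreeLT k m).subtype ∘ₗ LinearMap.fst k _ _ -
      y • ev ∘ₗ (degreeLT k n).subtype ∘ₗ LinearMap.snd k _ _
  have : Module.Finite k (degreeLT k m) := .equiv (degreeLTEquiv k m).symm
  have : Module.Finite k (degreeLT k n) := .equiv (degreeLTEquiv k n).symm
  have hlt : finrank k A < finrank k (degreeLT k m × degreeLT k n) := by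
    simpa [finrank_prod, (degreeLTEquiv k m).finrank_eq, (degreeLTEquiv k n).finrank_eq]
      using hdim
  obtain ⟨⟨⟨a, ha⟩, ⟨b, hb⟩⟩, hker, hne⟩ :=
    Submodule.exists_mem_ne_zero_of_ne_bot (LinearMap.ker_ne_bot_of_finrank_lt (f := f) hlt)
  refine ⟨a, ha, b, hb, fun hab => hne ?_, ?_⟩
  · simp_all [Prod.ext_iff]
  · exact (sub_eq_zero.mp (by simpa [f, ev] using hker)).symm

theorem eq_zero_of_aeval_eq_zero_of_natDegree_lt {k A : Type*} [Field k] [Ring A] [Algebra k A]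
    {x : A} {p : k[X]} (hp : aeval x p = 0) (hlt : p.natDegree < (minpoly k x).natDegree) :
    p = 0 := by
  by_contra hp0
  exact hlt.not_ge (natDegree_le_natDegree (minpoly.degree_le_of_ne_zero k x hp0 hp))

end Polynomial

theorem IntermediateField.finrank_eq_natDegree_minpoly_of_adjoin_eq_top {k K : Type*} [Field k]
    [Field K] [Algebra k K] {x : K} (hx : IsIntegral k x) (hgen : adjoin k {x} = ⊤) :
    finrank k K = (minpoly k x).natDegree := by
  rw [← adjoin.finrank hx, hgen, finrank_top']

theorem stmt_5_general {k K : Type*} [Field k] [Field K] [Algebra k K]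
    (h : ℕ) (x₀ : K)
    (hdeg : (minpoly k x₀).natDegree = 2 * h + 1)
    (hgen : IntermediateField.adjoin k {x₀} = ⊤) :
    ∀ y : K, ∃ a b : Polynomial k,
      a.natDegree ≤ h ∧ b.natDegree ≤ h ∧ b ≠ 0 ∧
      y * Polynomial.aeval x₀ b = Polynomial.aeval x₀ a := by
  intro y
  have hint : IsIntegral k x₀ := minpoly.ne_zero_iff.mp fun h0 => by simp [h0] at hdeg
  have hdim : finrank k K = 2 * h + 1 :=
    hdeg ▸ finrank_eq_natDegree_minpoly_of_adjoin_eq_top hint hgen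
  have : FiniteDimensional k K := Module.finite_of_finrank_pos (by omega)
  obtain ⟨a, ha, b, hb, hab, hy⟩ :=
    exists_degreeLT_mul_aeval_eq_aeval (k := k) (m := h + 1) (n := h + 1) x₀ y (by omega)
  rw [degreeLT_succ_eq_degreeLE, mem_degreeLE, ← natDegree_le_iff_degree_le] at ha hb
  have hb0 : b ≠ 0 := by
    rintro rfl
    have ha0 : a = 0 := eq_zero_of_aeval_eq_zero_of_natDegree_lt (by simpa using hy.symm) (by omega)
    exact hab (by simp [ha0])
  exact ⟨a, b, ha, hb, hb0, hy⟩

/-- If `x₀ ∈ K` is algebraic over `k`, with minimal polynomial of degree `2h+1`,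
and `K = k(x₀)`, then every `y ∈ K` can be written as `a(x₀)/b(x₀)` with
`a, b ∈ k[X]` of degree `≤ h` and `b ≠ 0`. -/
theorem stmt_5 {k K : Type*} [Field k] [Field K] [Algebra k K]
    (h : ℕ) (x₀ : K) (halg : IsAlgebraic k x₀)
    (hdeg : (minpoly k x₀).natDegree = 2 * h + 1)
    (hgen : IntermediateField.adjoin k {x₀} = ⊤) :
    ∀ y : K, ∃ a b : Polynomial k,
      a.natDegree ≤ h ∧ b.natDegree ≤ h ∧ b ≠ 0 ∧
      y * Polynomial.aeval x₀ b = Polynomial.aeval x₀ a :=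
  stmt_5_general h x₀ hdeg hgen
end

section
/- Let k be a field, K a field extension of k, h a natural number, and x₀ ∈ K an element algebraic over k whose minimal polynomial has degree 2h+1 and with K = k(x₀). Then the map ι sending each rational function f ∈ k(X) of degree at most h to ι(f) := (num f)(x₀)·((denom f)(x₀))⁻¹ ∈ K is a bijection from {f ∈ k(X) : deg f ≤ h} onto K. (The denominator does not vanish at x₀ since its degree is ≤ h < 2h+1.) -/
open Polynomial

/-- Enumeration bijection for the genus-zero codes: if `x₀ ∈ K` is algebraic over `k`
with minimal polynomial of degree `2h+1` and `K = k(x₀)`, then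
`f ↦ (num f)(x₀) · ((denom f)(x₀))⁻¹` is a bijection from the set of rational
functions `f ∈ k(X)` of degree `≤ h` onto `K`. -/
theorem stmt_6 {k K : Type*} [Field k] [Field K] [Algebra k K]
    (h : ℕ) (x₀ : K) (halg : IsAlgebraic k x₀)
    (hdeg : (minpoly k x₀).natDegree = 2 * h + 1)
    (hgen : IntermediateField.adjoin k {x₀} = ⊤) :
    Set.BijOn
      (fun f : RatFunc k =>
        Polynomial.aeval x₀ f.num * (Polynomial.aeval x₀ f.denom)⁻¹)
      {f : RatFunc k | max f.num.natDegree f.denom.natDegree ≤ h}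
      Set.univ := by
  -- key vanishing fact
  have key : ∀ r : k[X], r.natDegree ≤ 2 * h → Polynomial.aeval x₀ r = 0 → r = 0 := by
    intro r hr hz
    by_contra hr0
    have hdvd : minpoly k x₀ ∣ r := minpoly.dvd k x₀ hz
    have := Polynomial.natDegree_le_of_dvd hdvd hr0
    omega
  have keyne : ∀ r : k[X], r ≠ 0 → r.natDegree ≤ h → Polynomial.aeval x₀ r ≠ 0 := by
    intro r hr0 hr hz
    exact hr0 (key r (by omega) hz)
  refine ⟨Set.mapsTo_univ _ _, ?_, ?_⟩
  · -- injectivity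
    intro f hf g hg hfg
    simp only [Set.mem_setOf_eq, max_le_iff] at hf hg
    have hfd : Polynomial.aeval x₀ f.denom ≠ 0 :=
      keyne _ f.denom_ne_zero hf.2
    have hgd : Polynomial.aeval x₀ g.denom ≠ 0 :=
      keyne _ g.denom_ne_zero hg.2
    simp only [] at hfg
    have hcross : Polynomial.aeval x₀ f.num * Polynomial.aeval x₀ g.denom
        = Polynomial.aeval x₀ g.num * Polynomial.aeval x₀ f.denom := by
      field_simp at hfg
      linear_combination hfg
    have hz : Polynomial.aeval x₀ (f.num * g.denom - g.num * f.denom) = 0 := by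
      simp [hcross]
    have hdegd : (f.num * g.denom - g.num * f.denom).natDegree ≤ 2 * h := by
      refine le_trans (Polynomial.natDegree_sub_le _ _) (max_le ?_ ?_) <;>
        refine le_trans (Polynomial.natDegree_mul_le) ?_ <;> omega
    have h0 : f.num * g.denom = g.num * f.denom := by
      have := key _ hdegd hz
      linear_combination this
    -- conclude f = g
    have hfe := f.num_div_denom
    have hge := g.num_div_denom
    rw [← hfe, ← hge, div_eq_div_iff (RatFunc.algebraMap_ne_zero f.denom_ne_zero)
      (RatFunc.algebraMap_ne_zero g.denom_ne_zero), ← map_mul, ← map_mul, h0]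
  · -- surjectivity
    intro y _
    by_cases hy : y = 0
    · refine ⟨0, ?_, ?_⟩
      · simp [Set.mem_setOf_eq]
      · simp [hy]
    -- finite dimensionality
    have hint : IsIntegral k x₀ := halg.isIntegral
    have hfd0 : FiniteDimensional k (IntermediateField.adjoin k {x₀}) :=
      IntermediateField.adjoin.finiteDimensional hint
    have hfdtop : FiniteDimensional k (⊤ : IntermediateField k K) := hgen ▸ hfd0
    have hfd : FiniteDimensional k K :=
      (IntermediateField.topEquiv (F := k) (E := K)).toLinearEquiv.finiteDimensional
    have hfrK : Module.finrank k K = 2 * h + 1 := by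
      have h1 : Module.finrank k (IntermediateField.adjoin k {x₀}) = 2 * h + 1 := by
        rw [IntermediateField.adjoin.finrank hint, hdeg]
      rw [← IntermediateField.finrank_top' (F := k) (E := K), ← hgen, h1]
    -- the subspace of values of polynomials of degree ≤ h
    set L : (Polynomial.degreeLT k (h + 1)) →ₗ[k] K :=
      (Polynomial.aeval x₀).toLinearMap ∘ₗ (Polynomial.degreeLT k (h + 1)).subtype with hL
    have hLinj : Function.Injective L := by
      rw [injective_iff_map_eq_zero]
      rintro ⟨r, hr⟩ hz
      rw [Polynomial.mem_degreeLT] at hr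
      have hrd : r.natDegree ≤ 2 * h := by
        rcases eq_or_ne r 0 with rfl | hr0
        · simp
        · have := (Polynomial.natDegree_lt_iff_degree_lt hr0).mpr (by exact_mod_cast hr)
          omega
      have : r = 0 := key r hrd hz
      simpa using this
    set V : Submodule k K := LinearMap.range L with hV
    set W : Submodule k K := V.map (LinearMap.mulLeft k y) with hW
    have hmulinj : Function.Injective (LinearMap.mulLeft k y) := by
      intro a b hab
      simpa [hy] using hab
    have hfrdlt : Module.finrank k (Polynomial.degreeLT k (h + 1)) = h + 1 := by
      rw [(Polynomial.degreeLTEquiv k (h + 1)).finrank_eq, Module.finrank_fin_fun]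
    have hfrV : Module.finrank k V = h + 1 := by
      rw [LinearMap.finrank_range_of_inj hLinj, hfrdlt]
    have hfrW : Module.finrank k W = h + 1 := by
      rw [← (V.equivMapOfInjective _ hmulinj).finrank_eq, hfrV]
    -- V ⊓ W is nontrivial
    have hne : V ⊓ W ≠ ⊥ := by
      intro hbot
      have := Submodule.finrank_sup_add_finrank_inf_eq V W
      rw [hbot] at this
      simp only [finrank_bot, add_zero] at this
      have hle := Submodule.finrank_le (V ⊔ W)
      omega
    obtain ⟨v, hv, hv0⟩ := Submodule.exists_mem_ne_zero_of_ne_bot hne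
    obtain ⟨hvV, hvW⟩ := Submodule.mem_inf.mp hv
    obtain ⟨⟨p, hp⟩, hpv⟩ := hvV
    obtain ⟨w, hwV, hwv⟩ := hvW
    obtain ⟨⟨q, hq⟩, hqw⟩ := hwV
    simp only [hL, LinearMap.coe_comp, Function.comp_apply, Submodule.coe_subtype,
      AlgHom.toLinearMap_apply] at hpv hqw
    rw [Polynomial.mem_degreeLT] at hp hq
    have hpval : Polynomial.aeval x₀ p = v := hpv
    have hqval : Polynomial.aeval x₀ q = w := hqw
    have hyw : y * w = v := by simpa [LinearMap.mulLeft_apply] using hwv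
    have hw0 : w ≠ 0 := by
      intro h0; apply hv0; rw [← hyw, h0, mul_zero]
    have hq0 : q ≠ 0 := by
      intro h0; apply hw0; rw [← hqval, h0, map_zero]
    have hp0 : p ≠ 0 := by
      intro h0; apply hv0; rw [← hpval, h0, map_zero]
    have hpd : p.natDegree ≤ h := by
      have := (Polynomial.natDegree_lt_iff_degree_lt hp0).mpr (by exact_mod_cast hp)
      omega
    have hqd : q.natDegree ≤ h := by
      have := (Polynomial.natDegree_lt_iff_degree_lt hq0).mpr (by exact_mod_cast hq)
      omega
    set f : RatFunc k := algebraMap k[X] (RatFunc k) p / algebraMap k[X] (RatFunc k) q with hf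
    have hnumdvd : f.num ∣ p := RatFunc.num_div_dvd p hq0
    have hdenomdvd : f.denom ∣ q := RatFunc.denom_div_dvd p q
    have hnumdeg : f.num.natDegree ≤ h :=
      le_trans (Polynomial.natDegree_le_of_dvd hnumdvd hp0) hpd
    have hdenomdeg : f.denom.natDegree ≤ h :=
      le_trans (Polynomial.natDegree_le_of_dvd hdenomdvd hq0) hqd
    refine ⟨f, ?_, ?_⟩
    · simp only [Set.mem_setOf_eq, max_le_iff]; exact ⟨hnumdeg, hdenomdeg⟩
    · -- value of f at x₀ equals y
      have hcross : f.num * q = p * f.denom := by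
        have h1 : algebraMap k[X] (RatFunc k) f.num / algebraMap k[X] (RatFunc k) f.denom
            = algebraMap k[X] (RatFunc k) p / algebraMap k[X] (RatFunc k) q := by
          rw [f.num_div_denom]
        rw [div_eq_div_iff (RatFunc.algebraMap_ne_zero f.denom_ne_zero)
          (RatFunc.algebraMap_ne_zero hq0), ← map_mul, ← map_mul] at h1
        exact RatFunc.algebraMap_injective k h1
      have hcrossval : Polynomial.aeval x₀ f.num * Polynomial.aeval x₀ q
          = Polynomial.aeval x₀ p * Polynomial.aeval x₀ f.denom := by
        have := congrArg (Polynomial.aeval x₀) hcross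
        simpa [map_mul] using this
      have hfd : Polynomial.aeval x₀ f.denom ≠ 0 := keyne _ f.denom_ne_zero hdenomdeg
      have hqv : Polynomial.aeval x₀ q ≠ 0 := by rw [hqval]; exact hw0
      have hyval : y = Polynomial.aeval x₀ p * (Polynomial.aeval x₀ q)⁻¹ := by
        rw [hpval, hqval, ← hyw]
        field_simp
      simp only []
      rw [hyval]
      field_simp
      linear_combination hcrossval
end

section
/- Let q > 1 be real, g a positive integer, and λ₁,…,λ_{2g} ∈ ℂ with |λ_j| = √q for all j, satisfying the functional-equation identity ∏_{j=1}^{2g}(1 − λ_j) = q^g · ∏_{j=1}^{2g}(1 − λ_j/q). Let M_n be the n-th Taylor coefficient at 0 of ∏_{j=1}^{2g}(1 − λ_j w)/((1−w)(1−qw)). Then for every integer n > 2g − 2: M_n = (q/(q−1)) · L(1/q) · (qⁿ − q^{g−1}), where L(1/q) = ∏_{j=1}^{2g}(1 − λ_j/q). -/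
/-!
Partial fractions. Since `L` has degree `2g`, dividing by `(1 - w)(1 - qw)` leaves a polynomial
part `Q` of degree at most `2g - 2`:
`Z₁(w) = Q(w) + L(1)/(1 - q) · 1/(1 - w) + L(1/q)/(1 - 1/q) · 1/(1 - qw)`.
So for `n > 2g - 2` only the two geometric series contribute,
`Mₙ = L(1)/(1 - q) + L(1/q) qⁿ⁺¹/(q - 1)`, and the functional equation `L(1) = q^g L(1/q)`
turns this into the closed formula.
-/

open Polynomial FormalMultilinearSeries

theorem eq_of_hasSum_pow_eq {𝕜 : Type*} [NontriviallyNormedField 𝕜] {f : 𝕜 → 𝕜}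
    {a b : ℕ → 𝕜} {r : ℝ} (hr : 0 < r)
    (ha : ∀ w : 𝕜, ‖w‖ < r → HasSum (fun n => a n * w ^ n) (f w))
    (hb : ∀ w : 𝕜, ‖w‖ < r → HasSum (fun n => b n * w ^ n) (f w)) : a = b := by
  obtain ⟨z, hz0, hzr⟩ := NormedField.exists_norm_lt 𝕜 hr
  have hasFPowerSeries : ∀ c : ℕ → 𝕜,
      (∀ w : 𝕜, ‖w‖ < r → HasSum (fun n => c n * w ^ n) (f w)) →
        HasFPowerSeriesOnBall f (ofScalars 𝕜 c) 0 ‖z‖₊ := by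
    intro c hc
    refine ⟨?_, by simpa using hz0, fun {y} hy => ?_⟩
    · refine (ofScalars 𝕜 c).le_radius_of_tendsto (l := 0) ?_
      simpa [ofScalars_norm, norm_mul, norm_pow] using
        (hc z hzr).summable.tendsto_atTop_zero.norm
    · have hy' : ‖y‖ < r := lt_trans (by simpa using hy) hzr
      simpa [ofScalars_apply_eq, mul_comm] using hc y hy'
  exact ofScalars_series_injective 𝕜 𝕜
    ((hasFPowerSeries a ha).hasFPowerSeriesAt.eq_formalMultilinearSeries
      (hasFPowerSeries b hb).hasFPowerSeriesAt)

theorem Polynomial.hasSum_coeff_mul_pow {R : Type*} [Semiring R] [TopologicalSpace R]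
    (p : R[X]) (w : R) : HasSum (fun n => p.coeff n * w ^ n) (p.eval w) := by
  rw [eval_eq_sum_range]
  exact hasSum_sum_of_ne_finset_zero fun n hn => by
    rw [coeff_eq_zero_of_natDegree_lt (by simpa using hn), zero_mul]

theorem Polynomial.exists_eq_mul_add_interpolate {K : Type*} [Field K] (p : K[X]) {a b : K}
    (hab : a ≠ b) :
    ∃ Q : K[X], Q.natDegree ≤ p.natDegree - 2 ∧
      p = (X - C a) * (X - C b) * Q + C (p.eval a / (a - b)) * (X - C b)
        + C (p.eval b / (b - a)) * (X - C a) := by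
  set R := C (p.eval a / (a - b)) * (X - C b) + C (p.eval b / (b - a)) * (X - C a)
  set d : K[X] := (X - C a) * (X - C b)
  have hd : d.Monic := (monic_X_sub_C a).mul (monic_X_sub_C b)
  have hab' : a - b ≠ 0 := sub_ne_zero.mpr hab
  have hdvd : d ∣ p - R := by
    refine (isCoprime_X_sub_C_of_isUnit_sub hab'.isUnit).mul_dvd ?_ ?_ <;>
      rw [dvd_iff_isRoot, IsRoot, eval_sub] <;>
      simp only [R, eval_add, eval_mul, eval_C, eval_sub, eval_X, sub_self, mul_zero, add_zero,
        zero_add] <;>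
      field_simp <;> ring
  have hR : R.natDegree ≤ 1 := by
    simp only [R]
    compute_degree
  have hd2 : d.natDegree = 2 := by simp [d, natDegree_mul, X_sub_C_ne_zero]
  refine ⟨(p - R) /ₘ d, ?_, ?_⟩
  · rw [natDegree_divByMonic _ hd, hd2]
    have := natDegree_sub_le p R
    omega
  · have h := modByMonic_add_div (p - R) d
    rw [(modByMonic_eq_zero_iff_dvd hd).mpr hdvd, zero_add] at h
    linear_combination -h

theorem Polynomial.exists_hasSum_eval_div_one_sub_mul_one_sub {K : Type*} [NormedField K]
    [CompleteSpace K] (p : K[X]) {u v : K} (hu : u ≠ 0) (hv : v ≠ 0) (huv : u ≠ v) :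
    ∃ Q : K[X], Q.natDegree ≤ p.natDegree - 2 ∧ ∀ w : K, ‖u * w‖ < 1 → ‖v * w‖ < 1 →
      HasSum (fun n => (Q.coeff n + p.eval u⁻¹ / (1 - v / u) * u ^ n
          + p.eval v⁻¹ / (1 - u / v) * v ^ n) * w ^ n)
        (p.eval w / ((1 - u * w) * (1 - v * w))) := by
  obtain ⟨Q, hQ, hp⟩ := p.exists_eq_mul_add_interpolate (inv_injective.ne huv)
  refine ⟨C (u * v)⁻¹ * Q, (natDegree_C_mul_le _ _).trans hQ, fun w huw hvw => ?_⟩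
  have hu1 : 1 - u * w ≠ 0 := sub_ne_zero.mpr fun h => by simp [← h] at huw
  have hv1 : 1 - v * w ≠ 0 := sub_ne_zero.mpr fun h => by simp [← h] at hvw
  have hpw : p.eval w / ((1 - u * w) * (1 - v * w)) = (u * v)⁻¹ * Q.eval w
      + p.eval u⁻¹ / (1 - v / u) * (1 - u * w)⁻¹
      + p.eval v⁻¹ / (1 - u / v) * (1 - v * w)⁻¹ := by
    nth_rw 1 [hp]
    simp only [eval_add, eval_mul, eval_sub, eval_X, eval_C]
    simp only [mul_comm u w, mul_comm v w] at hu1 hv1 ⊢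
    field_simp
    ring
  rw [hpw]
  refine ((((Q.hasSum_coeff_mul_pow w).mul_left (u * v)⁻¹).add
    ((hasSum_geometric_of_norm_lt_one huw).mul_left (p.eval u⁻¹ / (1 - v / u)))).add
    ((hasSum_geometric_of_norm_lt_one hvw).mul_left (p.eval v⁻¹ / (1 - u / v)))).congr_fun
    fun n => ?_
  simp only [coeff_C_mul, mul_pow]
  ring

theorem stmt_9_general (q : ℝ) (hq : 1 < q) (g : ℕ) (hg : 0 < g)
    (lam : Fin (2 * g) → ℂ)
    (hfe : ∏ j, (1 - lam j) = (q : ℂ) ^ g * ∏ j, (1 - lam j / (q : ℂ)))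
    (M : ℕ → ℂ)
    (hM : ∀ w : ℂ, ‖w‖ < 1 / q → HasSum (fun n : ℕ => M n * w ^ n)
      ((∏ j, (1 - lam j * w)) / ((1 - w) * (1 - (q : ℂ) * w))))
    (n : ℕ) (hn : 2 * g - 2 < n) :
    M n = ((q : ℂ) / ((q : ℂ) - 1)) * (∏ j, (1 - lam j / (q : ℂ))) *
      ((q : ℂ) ^ n - (q : ℂ) ^ (g - 1)) := by
  set L : ℂ[X] := ∏ j, (1 - C (lam j) * X)
  have hL : ∀ w, L.eval w = ∏ j, (1 - lam j * w) := fun w => by simp [L, eval_prod]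
  have hLdeg : L.natDegree ≤ 2 * g :=
    (natDegree_prod_le _ _).trans <|
      (Finset.sum_le_card_nsmul _ _ 1 fun j _ => by compute_degree).trans (by simp)
  set P := ∏ j, (1 - lam j / (q : ℂ))
  have hL1 : L.eval 1 = q ^ g * P := by simp [hL, hfe]
  have hLq : L.eval (q : ℂ)⁻¹ = P := by simp [hL, P, div_eq_mul_inv]
  have hq0 : 0 < q := zero_lt_one.trans hq
  have hqc : (q : ℂ) ≠ 0 := by exact_mod_cast hq0.ne'
  have hq1 : (1 : ℂ) ≠ q := by exact_mod_cast hq.ne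
  obtain ⟨Q, hQdeg, hsum⟩ := L.exists_hasSum_eval_div_one_sub_mul_one_sub one_ne_zero hqc hq1
  have hM_eq : M = fun n => Q.coeff n + q ^ g * P / (1 - q) + P / (1 - 1 / q) * q ^ n := by
    refine eq_of_hasSum_pow_eq (one_div_pos.mpr hq0) hM fun w hw => ?_
    have hqw : ‖(q : ℂ) * w‖ < 1 := by
      simpa [abs_of_pos hq0] using (lt_div_iff₀' hq0).mp hw
    have hw1 : ‖1 * w‖ < 1 := by simpa using hw.trans ((div_lt_one hq0).mpr hq)
    simpa only [inv_one, hL1, hLq, div_one, one_pow, mul_one, one_mul, hL] using hsum w hw1 hqw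
  have hqg : (q : ℂ) ^ g = q * q ^ (g - 1) := by rw [← pow_succ', Nat.sub_add_cancel hg]
  have hqm1 : (q : ℂ) - 1 ≠ 0 := sub_ne_zero.mpr hq1.symm
  simp only [hM_eq, coeff_eq_zero_of_natDegree_lt (show Q.natDegree < n by omega), hqg]
  field_simp
  ring

/-- Exact formula for the Taylor coefficients `Mₙ` of
`Z₁(w) = ∏ⱼ (1 − λⱼ w)/((1−w)(1−qw))` for `n > 2g−2`, given `|λⱼ| = √q` and the
functional-equation identity `∏ⱼ(1−λⱼ) = q^g ∏ⱼ(1−λⱼ/q)`: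
`Mₙ = (q/(q−1)) · L(1/q) · (qⁿ − q^(g−1))`. -/
theorem stmt_9 (q : ℝ) (hq : 1 < q) (g : ℕ) (hg : 0 < g)
    (lam : Fin (2 * g) → ℂ) (hlam : ∀ j, ‖lam j‖ = Real.sqrt q)
    (hfe : ∏ j, (1 - lam j) = (q : ℂ) ^ g * ∏ j, (1 - lam j / (q : ℂ)))
    (M : ℕ → ℂ)
    (hM : ∀ w : ℂ, ‖w‖ < 1 / q → HasSum (fun n : ℕ => M n * w ^ n)
      ((∏ j, (1 - lam j * w)) / ((1 - w) * (1 - (q : ℂ) * w))))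
    (n : ℕ) (hn : 2 * g - 2 < n) :
    M n = ((q : ℂ) / ((q : ℂ) - 1)) * (∏ j, (1 - lam j / (q : ℂ))) *
      ((q : ℂ) ^ n - (q : ℂ) ^ (g - 1)) :=
  stmt_9_general q hq g hg lam hfe M hM n hn
end

section
/- Let q > 1 be a real number. For ρ > 0 let B(ρ) := min over r ∈ [q^{−2}, q^{−3/2}] of r^{−ρ/2}·(1−r)/((1−q^{−1})(1−qr)). If ρ > 2q/(q²−1), then B(ρ) < q^ρ·(q+1)/(q−1) (strict inequality). -/
open Set Filter Real

/-- For `q > 1` and `ρ > 2q/(q²−1)`, the minimum `B(ρ)` of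
`r^{−ρ/2}·(1−r)/((1−q⁻¹)(1−qr))` over `r ∈ [q⁻², q^{−3/2}]` satisfies the strict
inequality `B(ρ) < q^ρ·(q+1)/(q−1)`. -/
theorem stmt_12 (q : ℝ) (hq : 1 < q) (ρ : ℝ) (hρ : 2 * q / (q ^ 2 - 1) < ρ) (B : ℝ)
    (hB : IsLeast
      ((fun r : ℝ => r ^ (-ρ / 2) * (1 - r) / ((1 - q⁻¹) * (1 - q * r))) ''
        Set.Icc (q ^ (-2 : ℝ)) (q ^ (-(3 : ℝ) / 2))) B) :
    B < q ^ ρ * (q + 1) / (q - 1) := by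
  have hq0 : (0:ℝ) < q := by linarith
  set f : ℝ → ℝ := fun r : ℝ => r ^ (-ρ / 2) * (1 - r) / ((1 - q⁻¹) * (1 - q * r)) with hf_def
  set a : ℝ := q ^ (-2 : ℝ) with ha_def
  set b : ℝ := q ^ (-(3 : ℝ) / 2) with hb_def
  have ha0 : 0 < a := Real.rpow_pos_of_pos hq0 _
  have hab : a < b := by
    rw [ha_def, hb_def, Real.rpow_lt_rpow_left_iff hq]; norm_num
  have hainv : a = q⁻¹ * q⁻¹ := by
    rw [ha_def, show (-2:ℝ) = (-1) + (-1) by norm_num, Real.rpow_add hq0, Real.rpow_neg_one]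
  have hqa : q * a = q⁻¹ := by rw [hainv]; field_simp
  have hk0 : 0 < 1 - q⁻¹ := by
    have : q⁻¹ < 1 := by rw [inv_lt_one_iff₀]; right; exact hq
    linarith
  have hq2 : (0:ℝ) < q ^ 2 - 1 := by nlinarith
  have hρ2 : 2 * q < ρ * (q ^ 2 - 1) := by
    rw [div_lt_iff₀ hq2] at hρ; linarith
  have hA : a ^ (-ρ / 2) = q ^ ρ := by
    rw [ha_def, ← Real.rpow_mul hq0.le]
    congr 1; ring
  -- value at a
  have hfa : f a = q ^ ρ * (q + 1) / (q - 1) := by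
    rw [hf_def]
    simp only
    rw [hA, hqa]
    rw [hainv]
    have h1 : (1 - q⁻¹) * (1 - q⁻¹) ≠ 0 := ne_of_gt (mul_pos hk0 hk0)
    have hq1 : q - 1 ≠ 0 := by intro h; linarith [sub_eq_zero.mp h]
    rw [div_eq_div_iff h1 hq1]
    field_simp
    ring
  -- derivative at a
  have hne : a ≠ 0 := ha0.ne'
  have hd1 : HasDerivAt (fun r : ℝ => r ^ (-ρ / 2)) ((-ρ / 2) * a ^ (-ρ / 2 - 1)) a :=
    Real.hasDerivAt_rpow_const (Or.inl hne)
  have hd2 : HasDerivAt (fun r : ℝ => 1 - r) (-1) a := by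
    simpa using (hasDerivAt_id a).const_sub 1
  have hd3 : HasDerivAt (fun r : ℝ => (1 - q⁻¹) * (1 - q * r)) ((1 - q⁻¹) * (-q)) a := by
    have : HasDerivAt (fun r : ℝ => 1 - q * r) (-q) a := by
      simpa using ((hasDerivAt_id a).const_mul q).const_sub 1
    simpa using this.const_mul (1 - q⁻¹)
  have hden : (1 - q⁻¹) * (1 - q * a) ≠ 0 := by
    rw [hqa]; exact ne_of_gt (mul_pos hk0 hk0)
  have hdf : HasDerivAt f
      (((((-ρ / 2) * a ^ (-ρ / 2 - 1)) * (1 - a) + a ^ (-ρ / 2) * (-1)) * ((1 - q⁻¹) * (1 - q * a))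
        - a ^ (-ρ / 2) * (1 - a) * ((1 - q⁻¹) * (-q))) / ((1 - q⁻¹) * (1 - q * a)) ^ 2) a :=
    (hd1.mul hd2).div hd3 hden
  set A : ℝ := a ^ (-ρ / 2) with hA_def
  have hApos : 0 < A := Real.rpow_pos_of_pos ha0 _
  have hsub : a ^ (-ρ / 2 - 1) = A / a := Real.rpow_sub_one hne _
  have hf'neg :
      ((((-ρ / 2) * a ^ (-ρ / 2 - 1)) * (1 - a) + A * (-1)) * ((1 - q⁻¹) * (1 - q * a))
        - A * (1 - a) * ((1 - q⁻¹) * (-q))) / ((1 - q⁻¹) * (1 - q * a)) ^ 2 < 0 := by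
    rw [hsub, hqa, hainv]
    apply div_neg_of_neg_of_pos
    · have key : ((-ρ / 2 * (A / (q⁻¹ * q⁻¹))) * (1 - q⁻¹ * q⁻¹) + A * (-1)) * ((1 - q⁻¹) * (1 - q⁻¹))
          - A * (1 - q⁻¹ * q⁻¹) * ((1 - q⁻¹) * (-q))
          = A * (q - 1) ^ 2 * (2 * q - ρ * (q ^ 2 - 1)) / (2 * q ^ 2) := by
        field_simp
        ring
      rw [key]
      apply div_neg_of_neg_of_pos _ (by positivity : (0:ℝ) < 2 * q ^ 2)
      have h1 : 2 * q - ρ * (q ^ 2 - 1) < 0 := by linarith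
      have h2 : 0 < A * (q - 1) ^ 2 := mul_pos hApos (pow_pos (by linarith) 2)
      nlinarith
    · exact pow_pos (mul_pos hk0 hk0) 2
  -- slope argument: some x in (a, b] has f x < f a
  have hslope := hasDerivAt_iff_tendsto_slope.mp hdf
  have hev : ∀ᶠ x in nhdsWithin a {a}ᶜ, slope f a x < 0 :=
    hslope.eventually (gt_mem_nhds hf'neg)
  have hev' : ∀ᶠ x in nhdsWithin a (Ioi a), slope f a x < 0 :=
    hev.filter_mono (nhdsWithin_mono a (fun x hx => ne_of_gt hx))
  have hmem : Ioc a b ∈ nhdsWithin a (Ioi a) := Ioc_mem_nhdsGT_of_mem ⟨le_refl a, hab⟩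
  obtain ⟨x, hx1, hx2⟩ := (hev'.and (eventually_of_mem hmem (fun _ h => h))).exists
  have hxa : a < x := hx2.1
  have hfx : f x < f a := by
    have hs : slope f a x = (f x - f a) / (x - a) := slope_def_field f a x
    rw [hs] at hx1
    have : f x - f a < 0 := by
      have := mul_neg_of_neg_of_pos hx1 (by linarith : (0:ℝ) < x - a)
      rwa [div_mul_cancel₀ _ (by linarith : x - a ≠ 0)] at this
    linarith
  have hBle : B ≤ f x := hB.2 ⟨x, ⟨le_of_lt hxa, hx2.2⟩, rfl⟩
  calc B ≤ f x := hBle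
    _ < f a := hfx
    _ = q ^ ρ * (q + 1) / (q - 1) := hfa
end

section
/- Let w, w′ ∈ ℂ and let s be a real number with 0 ≤ s < 1. If |w| = |w′| = s, then |(1−w)·(1−w′)| ≤ ((1+s)/(1−s))·|1 − w·w′|. In particular 1 − w·w′ ≠ 0 and |(1−w)(1−w′)/(1−ww′)| ≤ (1+s)/(1−s). -/
/-!
Put `a = ‖1 - w‖`, `b = ‖1 - w'‖`, `c = ‖1 - w w'‖`. The identities
`1 - w = (1 - w w') + w (w' - 1)` and `1 - w' = (1 - w w') + (w - 1) w'` give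
`a ≤ c + s b` and `b ≤ c + s a`, whence `(1 - s) b ≤ c`; together with `a ≤ 1 + s` this yields
`(1 - s) a b ≤ (1 + s) c`. Finally `c ≥ 1 - s² > 0`.
-/

section SeminormedRing

variable {R : Type*} [SeminormedRing R]

theorem norm_one_sub_le_norm_one_sub_mul_add (x y : R) :
    ‖1 - x‖ ≤ ‖1 - x * y‖ + ‖x‖ * ‖1 - y‖ :=
  calc ‖1 - x‖ = ‖(1 - x * y) + x * (y - 1)‖ := by noncomm_ring
    _ ≤ ‖1 - x * y‖ + ‖x‖ * ‖y - 1‖ := (norm_add_le _ _).trans (by gcongr; exact norm_mul_le _ _)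
    _ = ‖1 - x * y‖ + ‖x‖ * ‖1 - y‖ := by rw [norm_sub_rev y]

theorem norm_one_sub_le_norm_one_sub_mul_add' (x y : R) :
    ‖1 - y‖ ≤ ‖1 - x * y‖ + ‖y‖ * ‖1 - x‖ :=
  calc ‖1 - y‖ = ‖(1 - x * y) + (x - 1) * y‖ := by noncomm_ring
    _ ≤ ‖1 - x * y‖ + ‖x - 1‖ * ‖y‖ := (norm_add_le _ _).trans (by gcongr; exact norm_mul_le _ _)
    _ = ‖1 - x * y‖ + ‖y‖ * ‖1 - x‖ := by rw [norm_sub_rev x, mul_comm]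

theorem one_sub_mul_norm_one_sub_le_norm_one_sub_mul {x y : R} {s : ℝ}
    (hx : ‖x‖ ≤ s) (hy : ‖y‖ ≤ s) :
    (1 - s) * ‖1 - y‖ ≤ ‖1 - x * y‖ := by
  have ha := norm_one_sub_le_norm_one_sub_mul_add x y
  have hb := norm_one_sub_le_norm_one_sub_mul_add' x y
  have hs : 0 ≤ s := (norm_nonneg x).trans hx
  have ha' : ‖1 - x‖ ≤ ‖1 - x * y‖ + s * ‖1 - y‖ := ha.trans (by gcongr)
  have hb' : ‖1 - y‖ ≤ ‖1 - x * y‖ + s * ‖1 - x‖ := hb.trans (by gcongr)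
  -- Substituting `ha'` into `hb'` gives `(1 + s) ((1 - s) ‖1 - y‖ - ‖1 - x y‖) ≤ 0`.
  nlinarith [mul_le_mul_of_nonneg_left ha' hs]

end SeminormedRing

theorem stmt_13_general (w w' : ℂ) (s : ℝ) (hs1 : s < 1)
    (hw : ‖w‖ = s) (hw' : ‖w'‖ = s) :
    ‖(1 - w) * (1 - w')‖ ≤ (1 + s) / (1 - s) * ‖1 - w * w'‖ ∧
    1 - w * w' ≠ 0 ∧
    ‖(1 - w) * (1 - w') / (1 - w * w')‖ ≤ (1 + s) / (1 - s) := by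
  have hs : 0 < 1 - s := by linarith
  have ha : ‖1 - w‖ ≤ 1 + s := by simpa [hw] using norm_sub_le (1 : ℂ) w
  have hb := one_sub_mul_norm_one_sub_le_norm_one_sub_mul hw.le hw'.le
  have hmain : ‖(1 - w) * (1 - w')‖ ≤ (1 + s) / (1 - s) * ‖1 - w * w'‖ := by
    rw [norm_mul, div_mul_eq_mul_div, le_div_iff₀ hs, mul_assoc]
    exact mul_le_mul ha (by linarith) (by positivity) (by linarith [norm_nonneg w])
  have hpos : 0 < ‖1 - w * w'‖ := by
    have hww' : ‖w * w'‖ < 1 := by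
      rw [norm_mul, hw, hw']
      nlinarith [norm_nonneg w]
    have := norm_sub_norm_le (1 : ℂ) (w * w')
    rw [norm_one] at this
    linarith
  refine ⟨hmain, norm_pos_iff.mp hpos, ?_⟩
  rwa [norm_div, div_le_iff₀ hpos]

/-- If `|w| = |w′| = s < 1` in `ℂ`, then
`|(1−w)(1−w′)| ≤ ((1+s)/(1−s))·|1 − w w′|`; in particular `1 − w w′ ≠ 0` and
`|(1−w)(1−w′)/(1−w w′)| ≤ (1+s)/(1−s)`. -/
theorem stmt_13 (w w' : ℂ) (s : ℝ) (hs0 : 0 ≤ s) (hs1 : s < 1)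
    (hw : ‖w‖ = s) (hw' : ‖w'‖ = s) :
    ‖(1 - w) * (1 - w')‖ ≤ (1 + s) / (1 - s) * ‖1 - w * w'‖ ∧
    1 - w * w' ≠ 0 ∧
    ‖(1 - w) * (1 - w') / (1 - w * w')‖ ≤ (1 + s) / (1 - s) :=
  stmt_13_general w w' s hs1 hw hw'
end

section
/- Let q ≥ 4 be a real number and set κ := 1/(√q − 1). For ρ > 0 define B₁(ρ) := ((q+1)/q)·q^κ · inf{ r^{−ρ/2}·(1+r)·(1+√(qr))^{4κ} : 0 < r ≤ q^{−1/2} }. Then there exists a unique ρ₁ > 0 such that B₁(ρ₁) = q^{ρ₁}·(q+1)/(q−1), and moreover B₁(ρ) < q^{ρ}·(q+1)/(q−1) for every ρ > ρ₁. -/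
/-!
For each `r`, `ρ ↦ log (r ^ (-ρ / 2) * (1 + r) * (1 + √(q r)) ^ (4κ))` is affine, so the logarithm of the infimum in `B₁(ρ)`
is concave in `ρ`, and so is the gap `log B₁(ρ) - log (q ^ ρ (q + 1) / (q - 1))`.
Since `r ^ (-ρ / 2) ≥ q ^ (ρ / 4)` on the range of `r`, with equality at `r = q ^ (-1/2)`, the
infimum is squeezed between `q ^ (ρ / 4)` and a constant multiple of it: the gap is positive at
`ρ = 0` (because `q ^ κ > q / (q - 1)`) and tends to `-∞`. A concave function on `[0, ∞)` that is
positive at `0` and somewhere negative vanishes at exactly one positive point and is negative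
beyond it.
-/

open Real Set

noncomputable section

def rpowInf (s : Set ℝ) (g : ℝ → ℝ) (ρ : ℝ) : ℝ :=
  sInf ((fun r => r ^ ρ * g r) '' s)

section rpowInf

variable {s : Set ℝ} {g : ℝ → ℝ}

lemma rpowInf_le (hs : ∀ r ∈ s, 0 < r) (hg : ∀ r ∈ s, 0 < g r) {r : ℝ} (hr : r ∈ s) (ρ : ℝ) :
    rpowInf s g ρ ≤ r ^ ρ * g r := by
  refine csInf_le ⟨0, forall_mem_image.2 fun r' hr' => ?_⟩ (mem_image_of_mem _ hr)
  have := hs r' hr'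
  have := hg r' hr'
  positivity

lemma rpow_le_rpowInf {r₀ ρ : ℝ} (hs : s ⊆ Ioc 0 r₀) (hne : s.Nonempty) (hg : ∀ r ∈ s, 1 ≤ g r)
    (hρ : ρ ≤ 0) : r₀ ^ ρ ≤ rpowInf s g ρ := by
  refine le_csInf (hne.image _) (forall_mem_image.2 fun r hr => ?_)
  obtain ⟨hr0, hrr₀⟩ := hs hr
  calc r₀ ^ ρ ≤ r ^ ρ := rpow_le_rpow_of_nonpos hr0 hrr₀ hρ
    _ ≤ r ^ ρ * g r := le_mul_of_one_le_right (by positivity) (hg r hr)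

lemma rpowInf_rpow_mul_rpow_le (hs : ∀ r ∈ s, 0 < r) (hg : ∀ r ∈ s, 0 < g r) (hne : s.Nonempty)
    {x y a b : ℝ} (ha : 0 ≤ a) (hb : 0 ≤ b) (hab : a + b = 1) :
    rpowInf s g x ^ a * rpowInf s g y ^ b ≤ rpowInf s g (a * x + b * y) := by
  have hnonneg : ∀ ρ, 0 ≤ rpowInf s g ρ := fun ρ =>
    Real.sInf_nonneg (forall_mem_image.2 fun r hr =>
      (mul_pos (rpow_pos_of_pos (hs r hr) ρ) (hg r hr)).le)
  have hx := hnonneg x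
  have hy := hnonneg y
  refine le_csInf (hne.image _) (forall_mem_image.2 fun r hrs => ?_)
  have hr := hs r hrs
  have hgr := hg r hrs
  calc rpowInf s g x ^ a * rpowInf s g y ^ b ≤ (r ^ x * g r) ^ a * (r ^ y * g r) ^ b := by
        gcongr <;> exact rpowInf_le hs hg hrs _
    _ = (r ^ (a * x) * r ^ (b * y)) * (g r ^ a * g r ^ b) := by
        rw [mul_rpow (by positivity) hgr.le, mul_rpow (by positivity) hgr.le, ← rpow_mul hr.le,
          ← rpow_mul hr.le, mul_comm x a, mul_comm y b]
        ring
    _ = r ^ (a * x + b * y) * g r := by rw [← rpow_add hr, ← rpow_add hgr, hab, rpow_one]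

lemma concaveOn_log_rpowInf (hs : ∀ r ∈ s, 0 < r) (hg : ∀ r ∈ s, 0 < g r) (hne : s.Nonempty)
    {D : Set ℝ} (hD : Convex ℝ D) (hpos : ∀ ρ ∈ D, 0 < rpowInf s g ρ) :
    ConcaveOn ℝ D fun ρ => log (rpowInf s g ρ) := by
  refine ⟨hD, fun x hx y hy a b ha hb hab => ?_⟩
  have hx := hpos x hx
  have hy := hpos y hy
  calc a • log (rpowInf s g x) + b • log (rpowInf s g y)
      = log (rpowInf s g x ^ a * rpowInf s g y ^ b) := by
        rw [log_mul (by positivity) (by positivity), log_rpow hx, log_rpow hy, smul_eq_mul,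
          smul_eq_mul]
    _ ≤ log (rpowInf s g (a • x + b • y)) :=
        log_le_log (by positivity) (rpowInf_rpow_mul_rpow_le hs hg hne ha hb hab)

end rpowInf

namespace ConcaveOn

variable {f : ℝ → ℝ}

lemma neg_of_lt_of_eq_zero (hf : ConcaveOn ℝ (Ici 0) f) (h0 : 0 < f 0) {x y : ℝ} (hx : 0 < x)
    (hxy : x < y) (hfx : f x = 0) : f y < 0 := by
  by_contra! hfy
  have hy : 0 < y := hx.trans hxy
  have ht : 0 < x / y := div_pos hx hy
  have ht1 : x / y < 1 := (div_lt_one hy).2 hxy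
  have := hf.2 self_mem_Ici hy.le (sub_nonneg.2 ht1.le) ht.le (sub_add_cancel 1 (x / y))
  simp only [smul_eq_mul, mul_zero, zero_add, div_mul_cancel₀ x hy.ne', hfx] at this
  nlinarith [mul_pos (sub_pos.2 ht1) h0, mul_nonneg ht.le hfy]

lemma exists_eq_zero (hf : ConcaveOn ℝ (Ici 0) f) (h0 : 0 < f 0) {b : ℝ} (hb : 0 ≤ b)
    (hfb : f b < 0) : ∃ x ∈ Ioo 0 b, f x = 0 := by
  have hbpos : 0 < b := hb.lt_of_ne (by rintro rfl; linarith)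
  -- at `t * b` the chord from `(0, f 0)` to `(b, f b)` is at height `f 0 / 2`
  have hd : 0 < f 0 - f b := by linarith
  set t := f 0 / (f 0 - f b) / 2 with ht
  have ht0 : 0 < t := by positivity
  have ht1 : t < 1 := by rw [ht, div_div, div_lt_one (by linarith)]; linarith
  have hc : 0 < f (t * b) := by
    have := hf.2 self_mem_Ici hb (sub_nonneg.2 ht1.le) ht0.le (sub_add_cancel 1 t)
    simp only [smul_eq_mul, mul_zero, zero_add] at this
    have hchord : (1 - t) * f 0 + t * f b = f 0 / 2 := by
      rw [ht]; field_simp [hd.ne']; ring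
    linarith
  have hcb : t * b < b := mul_lt_of_lt_one_left hbpos ht1
  have hcont : ContinuousOn f (Icc (t * b) b) :=
    hf.continuousOn_interior.mono fun x hx => by
      rw [interior_Ici]; exact (mul_pos ht0 hbpos).trans_le hx.1
  obtain ⟨x, hx, hfx⟩ := intermediate_value_Ioo' hcb.le hcont ⟨hfb, hc⟩
  exact ⟨x, ⟨(mul_pos ht0 hbpos).trans hx.1, hx.2⟩, hfx⟩

lemma exists_pos_eq_zero_unique (hf : ConcaveOn ℝ (Ici 0) f) (h0 : 0 < f 0) {b : ℝ} (hb : 0 ≤ b)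
    (hfb : f b < 0) :
    ∃ x, 0 < x ∧ f x = 0 ∧ (∀ y, 0 < y → f y = 0 → y = x) ∧ ∀ y, x < y → f y < 0 := by
  obtain ⟨x, hx, hfx⟩ := hf.exists_eq_zero h0 hb hfb
  refine ⟨x, hx.1, hfx, fun y hy hfy => ?_, fun y hxy => hf.neg_of_lt_of_eq_zero h0 hx.1 hxy hfx⟩
  rcases lt_trichotomy y x with hyx | hyx | hyx
  · exact absurd hfx (hf.neg_of_lt_of_eq_zero h0 hy hyx hfy).ne
  · exact hyx
  · exact absurd hfy (hf.neg_of_lt_of_eq_zero h0 hx.1 hyx hfx).ne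

end ConcaveOn

def thresholdWeight (q κ r : ℝ) : ℝ := (1 + r) * (1 + √(q * r)) ^ (4 * κ)

def thresholdInf (q κ ρ : ℝ) : ℝ :=
  rpowInf (Ioc 0 (q ^ (-(1 : ℝ) / 2))) (thresholdWeight q κ) (-ρ / 2)

/-- `(q + 1) / q * q ^ κ * thresholdInf q κ ρ` is the paper's `B₁(ρ)`. -/
def thresholdGap (q κ ρ : ℝ) : ℝ :=
  log ((q + 1) / q * q ^ κ * thresholdInf q κ ρ) - log (q ^ ρ * (q + 1) / (q - 1))

lemma one_le_thresholdWeight (q : ℝ) {κ r : ℝ} (hκ : 0 ≤ κ) (hr : 0 ≤ r) :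
    1 ≤ thresholdWeight q κ r :=
  one_le_mul_of_one_le_of_one_le (by linarith)
    (one_le_rpow (le_add_of_nonneg_right (sqrt_nonneg _)) (by linarith))

section threshold

variable {q κ : ℝ}

lemma rpow_le_thresholdInf (hq : 0 < q) (hκ : 0 ≤ κ) {ρ : ℝ} (hρ : 0 ≤ ρ) :
    q ^ (ρ / 4) ≤ thresholdInf q κ ρ := by
  have := rpow_le_rpowInf (s := Ioc 0 (q ^ (-(1 : ℝ) / 2))) (g := thresholdWeight q κ) subset_rfl
    ⟨_, rpow_pos_of_pos hq _, le_rfl⟩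
    (fun r hr => one_le_thresholdWeight q hκ hr.1.le) (by linarith : -ρ / 2 ≤ 0)
  rwa [← rpow_mul hq.le, show -(1 : ℝ) / 2 * (-ρ / 2) = ρ / 4 by ring] at this

lemma thresholdInf_pos (hq : 0 < q) (hκ : 0 ≤ κ) {ρ : ℝ} (hρ : 0 ≤ ρ) : 0 < thresholdInf q κ ρ :=
  (rpow_pos_of_pos hq _).trans_le (rpow_le_thresholdInf hq hκ hρ)

lemma thresholdInf_le (hq : 0 < q) (hκ : 0 ≤ κ) (ρ : ℝ) :
    thresholdInf q κ ρ ≤ q ^ (ρ / 4) * thresholdWeight q κ (q ^ (-(1 : ℝ) / 2)) := by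
  have h₀ := rpow_pos_of_pos hq (-(1 : ℝ) / 2)
  have := rpowInf_le (s := Ioc 0 (q ^ (-(1 : ℝ) / 2))) (fun r hr => hr.1)
    (fun r hr => one_pos.trans_le (one_le_thresholdWeight q hκ hr.1.le)) ⟨h₀, le_rfl⟩ (-ρ / 2)
  rwa [← rpow_mul hq.le, show -(1 : ℝ) / 2 * (-ρ / 2) = ρ / 4 by ring] at this

lemma concaveOn_log_thresholdInf (hq : 0 < q) (hκ : 0 ≤ κ) :
    ConcaveOn ℝ (Ici 0) fun ρ => log (thresholdInf q κ ρ) := by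
  have h₀ := rpow_pos_of_pos hq (-(1 : ℝ) / 2)
  have hone : ∀ r ∈ Ioc 0 (q ^ (-(1 : ℝ) / 2)), 1 ≤ thresholdWeight q κ r :=
    fun r hr => one_le_thresholdWeight q hκ hr.1.le
  have hconc := concaveOn_log_rpowInf (fun r hr => hr.1) (fun r hr => one_pos.trans_le (hone r hr))
    ⟨_, h₀, le_rfl⟩ (convex_Iic 0) fun x hx =>
      (rpow_pos_of_pos h₀ x).trans_le (rpow_le_rpowInf subset_rfl ⟨_, h₀, le_rfl⟩ hone hx)
  refine ((hconc.comp_linearMap ((-(1 / 2) : ℝ) • LinearMap.id)).subset (fun ρ hρ => ?_)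
    (convex_Ici 0)).congr fun ρ _ => ?_
  · simp only [mem_preimage, LinearMap.smul_apply, LinearMap.id_apply, smul_eq_mul, mem_Iic]
    linarith [mem_Ici.1 hρ]
  · simp only [Function.comp_apply, LinearMap.smul_apply, LinearMap.id_apply, smul_eq_mul,
      thresholdInf]
    ring_nf

lemma thresholdGap_eq (hq : 1 < q) (hκ : 0 ≤ κ) {ρ : ℝ} (hρ : 0 ≤ ρ) :
    thresholdGap q κ ρ = log ((q + 1) / q * q ^ κ) - log ((q + 1) / (q - 1))
      + log (thresholdInf q κ ρ) - log q * ρ := by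
  have hq0 : 0 < q := by linarith
  have hS := thresholdInf_pos hq0 hκ hρ
  rw [thresholdGap, log_mul (by positivity) hS.ne', mul_div_assoc,
    log_mul (rpow_pos_of_pos hq0 ρ).ne' (div_pos (by linarith) (by linarith)).ne', log_rpow hq0]
  ring

lemma concaveOn_thresholdGap (hq : 1 < q) (hκ : 0 ≤ κ) : ConcaveOn ℝ (Ici 0) (thresholdGap q κ) :=
  (((concaveOn_log_thresholdInf (q := q) (by linarith) hκ).add_const
      (log ((q + 1) / q * q ^ κ) - log ((q + 1) / (q - 1)))).sub
    ((convexOn_id (convex_Ici 0)).smul (log_nonneg hq.le))).congr fun ρ hρ => by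
      simp only [Pi.add_apply, Pi.sub_apply, id, smul_eq_mul, thresholdGap_eq hq hκ hρ]
      ring

lemma div_sub_one_lt_rpow (hq : exp 1 ≤ q) (hκ : 1 / (q - 1) < κ) : q / (q - 1) < q ^ κ := by
  have hq1 : 1 < q := (one_lt_exp_iff.2 one_pos).trans_le hq
  have hq0 : 0 < q := by linarith
  have hlog : 1 ≤ log q := (le_log_iff_exp_le hq0).2 hq
  have hκ0 : 0 < κ := (by positivity : (0 : ℝ) < 1 / (q - 1)).trans hκ
  calc q / (q - 1) = 1 / (q - 1) + 1 := by field_simp [(sub_pos.2 hq1).ne']; ring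
    _ < κ + 1 := by linarith
    _ ≤ log q * κ + 1 := by nlinarith
    _ ≤ q ^ κ := by rw [rpow_def_of_pos hq0]; exact add_one_le_exp _

lemma thresholdGap_zero_pos (hq : exp 1 ≤ q) (hκ : 1 / (q - 1) < κ) : 0 < thresholdGap q κ 0 := by
  have hq1 : 1 < q := (one_lt_exp_iff.2 one_pos).trans_le hq
  have hq0 : 0 < q := by linarith
  have hκ0 : 0 ≤ κ := ((by positivity : (0 : ℝ) < 1 / (q - 1)).trans hκ).le
  have hS : 1 ≤ thresholdInf q κ 0 := by simpa using rpow_le_thresholdInf hq0 hκ0 le_rfl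
  refine sub_pos.2 (log_lt_log (by positivity) ?_)
  calc q ^ (0 : ℝ) * (q + 1) / (q - 1) = (q + 1) / q * (q / (q - 1)) := by
        rw [rpow_zero]; field_simp
    _ < (q + 1) / q * q ^ κ := by gcongr; exact div_sub_one_lt_rpow hq hκ
    _ ≤ (q + 1) / q * q ^ κ * thresholdInf q κ 0 := le_mul_of_one_le_right (by positivity) hS

lemma exists_thresholdGap_neg (hq : 1 < q) (hκ : 0 ≤ κ) : ∃ b, 0 ≤ b ∧ thresholdGap q κ b < 0 := by
  have hq0 : 0 < q := by linarith
  have hL : 0 < log q := log_pos hq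
  set K := log ((q + 1) / q * q ^ κ) - log ((q + 1) / (q - 1))
    + log (thresholdWeight q κ (q ^ (-(1 : ℝ) / 2))) with hK
  have hbound : ∀ ρ, 0 ≤ ρ → thresholdGap q κ ρ ≤ K - 3 / 4 * ρ * log q := by
    intro ρ hρ
    have hM := one_le_thresholdWeight q hκ (rpow_pos_of_pos hq0 (-(1 : ℝ) / 2)).le
    have hS := thresholdInf_pos hq0 hκ hρ
    have := log_le_log hS (thresholdInf_le hq0 hκ ρ)
    rw [log_mul (rpow_pos_of_pos hq0 _).ne' (by positivity), log_rpow hq0] at this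
    rw [thresholdGap_eq hq hκ hρ]
    linarith
  refine ⟨4 * |K| / (3 * log q) + 1, by positivity, (hbound _ (by positivity)).trans_lt ?_⟩
  have : 3 / 4 * (4 * |K| / (3 * log q) + 1) * log q = |K| + 3 / 4 * log q := by
    field_simp
  linarith [le_abs_self K]

lemma thresholdGap_eq_zero_iff (hq : 1 < q) (hκ : 0 ≤ κ) {ρ : ℝ} (hρ : 0 ≤ ρ) :
    thresholdGap q κ ρ = 0 ↔
      (q + 1) / q * q ^ κ * thresholdInf q κ ρ = q ^ ρ * (q + 1) / (q - 1) := by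
  have hq0 : 0 < q := by linarith
  have hS := thresholdInf_pos hq0 hκ hρ
  rw [thresholdGap, sub_eq_zero]
  exact log_injOn_pos.eq_iff (mem_Ioi.2 (by positivity))
    (mem_Ioi.2 (div_pos (by positivity) (by linarith)))

lemma thresholdGap_neg_iff (hq : 1 < q) (hκ : 0 ≤ κ) {ρ : ℝ} (hρ : 0 ≤ ρ) :
    thresholdGap q κ ρ < 0 ↔
      (q + 1) / q * q ^ κ * thresholdInf q κ ρ < q ^ ρ * (q + 1) / (q - 1) := by
  have hq0 : 0 < q := by linarith
  have hS := thresholdInf_pos hq0 hκ hρ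
  rw [thresholdGap, sub_neg]
  exact log_lt_log_iff (by positivity) (div_pos (by positivity) (by linarith))

end threshold

end

/-- Existence and uniqueness of the threshold `ρ₁ = ρ₁(q)` of Theorem 2: with
`κ = 1/(√q − 1)` and
`B₁(ρ) = ((q+1)/q)·q^κ·inf{ r^{−ρ/2}(1+r)(1+√(qr))^{4κ} : 0 < r ≤ q^{−1/2} }`,
there is a unique `ρ₁ > 0` with `B₁(ρ₁) = q^{ρ₁}·(q+1)/(q−1)`, and
`B₁(ρ) < q^ρ·(q+1)/(q−1)` for all `ρ > ρ₁`. -/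
theorem stmt_14 (q : ℝ) (hq : 4 ≤ q) (κ : ℝ) (hκ : κ = 1 / (Real.sqrt q - 1))
    (B₁ : ℝ → ℝ)
    (hB₁ : ∀ ρ : ℝ, B₁ ρ = (q + 1) / q * q ^ κ *
      sInf ((fun r : ℝ =>
          r ^ (-ρ / 2) * (1 + r) * (1 + Real.sqrt (q * r)) ^ (4 * κ)) ''
        Set.Ioc 0 (q ^ (-(1 : ℝ) / 2)))) :
    ∃ ρ₁ : ℝ, 0 < ρ₁ ∧ B₁ ρ₁ = q ^ ρ₁ * (q + 1) / (q - 1) ∧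
      (∀ ρ : ℝ, 0 < ρ → B₁ ρ = q ^ ρ * (q + 1) / (q - 1) → ρ = ρ₁) ∧
      (∀ ρ : ℝ, ρ₁ < ρ → B₁ ρ < q ^ ρ * (q + 1) / (q - 1)) := by
  have hq1 : 1 < q := by linarith
  have hsqrt : 1 < √q := by rw [lt_sqrt zero_le_one]; linarith
  have hκ_gt : 1 / (q - 1) < κ :=
    hκ ▸ one_div_lt_one_div_of_lt (by linarith) (by linarith [sqrt_lt_self_iff.2 hq1])
  have hκ0 : 0 ≤ κ := ((by positivity : (0 : ℝ) < 1 / (q - 1)).trans hκ_gt).le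
  have hB : ∀ ρ, B₁ ρ = (q + 1) / q * q ^ κ * thresholdInf q κ ρ := fun ρ => by
    simp only [hB₁, thresholdInf, rpowInf, thresholdWeight, mul_assoc]
  obtain ⟨b, hb, hgap_b⟩ := exists_thresholdGap_neg hq1 hκ0
  obtain ⟨ρ₁, hρ₁, hroot, huniq, hneg⟩ := (concaveOn_thresholdGap hq1 hκ0).exists_pos_eq_zero_unique
    (thresholdGap_zero_pos (by linarith [exp_one_lt_d9]) hκ_gt) hb hgap_b
  simp only [hB]
  exact ⟨ρ₁, hρ₁, (thresholdGap_eq_zero_iff hq1 hκ0 hρ₁.le).1 hroot,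
    fun ρ hρ h => huniq ρ hρ ((thresholdGap_eq_zero_iff hq1 hκ0 hρ.le).2 h),
    fun ρ hρ => (thresholdGap_neg_iff hq1 hκ0 (hρ₁.trans hρ).le).1 (hneg ρ hρ)⟩
end

section
/- Let q > 1 and s > 1/2 be real numbers. For each m ∈ ℕ let g_m be a positive integer and α_{m,1},…,α_{m,2g_m} real numbers (angles), and suppose that for every positive integer r: (1/(2g_m))·∑_{j=1}^{2g_m} cos(r·α_{m,j}) → ((1−√q)/2)·q^{−r/2} as m → ∞. Then (1/g_m)·∑_{j=1}^{2g_m} log|1 − √q·e^{i α_{m,j}}·q^{−s}| → −(√q − 1)·log(1 − q^{−s}) as m → ∞. -/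
/-!
With `ρ = √q·q^{-s} = q^{1/2-s} < 1`, each term expands as
`log|1 - ρ e^{iα}| = -∑_{r ≥ 1} ρ^r cos(rα) / r`, so the normalized sum becomes a series whose
`r`-th coefficient is a Weyl sum. The coefficients are bounded by `2ρ^r` uniformly in `m`, so
Tannery's theorem passes the limit inside the series, and since `ρ^r q^{-r/2} = q^{-rs}` the
limiting series is `(√q - 1)·∑_{r ≥ 1} q^{-rs} / r = -(√q - 1)·log(1 - q^{-s})`.
-/

open Filter Topology

-- The `n = 0` term vanishes because `x / 0 = 0`.
lemma hasSum_log_norm_one_sub_mul_exp {r : ℝ} (hr : |r| < 1) (θ : ℝ) :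
    HasSum (fun n : ℕ => -(r ^ n / n * Real.cos (n * θ)))
      (Real.log ‖1 - r * Complex.exp (θ * Complex.I)‖) := by
  set z : ℂ := r * Complex.exp (θ * Complex.I)
  have hz : ‖z‖ < 1 := by simpa [z, Complex.norm_exp_ofReal_mul_I] using hr
  have hterm (n : ℕ) : (z ^ n / n).re = r ^ n / n * Real.cos (n * θ) := by
    have hpow : z ^ n / n = ((r ^ n / n : ℝ) : ℂ) * Complex.exp ((n * θ : ℝ) * Complex.I) := by
      simp only [z, mul_pow, ← Complex.exp_nat_mul]
      push_cast
      ring_nf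
    rw [hpow, Complex.re_ofReal_mul, Complex.exp_ofReal_mul_I_re]
  simpa [hterm, Complex.log_re] using
    (Complex.hasSum_re (Complex.hasSum_taylorSeries_neg_log hz)).neg

lemma hasSum_pow_div_natCast {x : ℝ} (hx : |x| < 1) :
    HasSum (fun n : ℕ => x ^ n / n) (-Real.log (1 - x)) := by
  have hpos : 0 < 1 - x := by linarith [le_abs_self x]
  have := (hasSum_log_norm_one_sub_mul_exp hx 0).neg
  simp only [Complex.ofReal_zero, zero_mul, Complex.exp_zero, mul_one, mul_zero, Real.cos_zero,
    neg_neg] at this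
  rwa [← Complex.ofReal_one, ← Complex.ofReal_sub, Complex.norm_real, Real.norm_eq_abs,
    abs_of_pos hpos] at this

lemma rpow_neg_natCast_div_two {q : ℝ} (hq : 0 ≤ q) (n : ℕ) :
    q ^ (-(n : ℝ) / 2) = (√q ^ n)⁻¹ := by
  rw [Real.sqrt_eq_rpow, ← Real.rpow_natCast, ← Real.rpow_mul hq, ← Real.rpow_neg hq]
  ring_nf

theorem tendsto_mul_sum_log_norm_one_sub_mul_exp {β : Type*} {l : Filter β}
    {ι : β → Type*} [∀ m, Fintype (ι m)] {w : β → ℝ} {θ : (m : β) → ι m → ℝ} {ρ C : ℝ}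
    {a : ℕ → ℝ} (hρ : |ρ| < 1) (hC : ∀ m, |w m| * Fintype.card (ι m) ≤ C)
    (ha : ∀ r : ℕ, 0 < r → Tendsto (fun m => w m * ∑ j, Real.cos (r * θ m j)) l (𝓝 (a r))) :
    Tendsto (fun m => w m * ∑ j, Real.log ‖1 - ρ * Complex.exp (θ m j * Complex.I)‖) l
      (𝓝 (∑' r : ℕ, -(ρ ^ r / r * a r))) := by
  set F : β → ℕ → ℝ := fun m r => -(ρ ^ r / r) * (w m * ∑ j, Real.cos (r * θ m j))
  have hF (m : β) :
      HasSum (F m) (w m * ∑ j, Real.log ‖1 - ρ * Complex.exp (θ m j * Complex.I)‖) := by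
    refine ((hasSum_sum fun j _ =>
      hasSum_log_norm_one_sub_mul_exp hρ (θ m j)).mul_left (w m)).congr_fun fun r => ?_
    simp only [F, Finset.mul_sum]
    exact Finset.sum_congr rfl fun j _ => by ring
  have hlim (r : ℕ) : Tendsto (F · r) l (𝓝 (-(ρ ^ r / r * a r))) := by
    rcases r.eq_zero_or_pos with rfl | hr
    · simpa [F] using tendsto_const_nhds
    · simpa [F, neg_mul] using (ha r hr).const_mul (-(ρ ^ r / r))
  have hcoef (r : ℕ) : |ρ ^ r / r| ≤ |ρ| ^ r := by
    rcases r.eq_zero_or_pos with rfl | hr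
    · simp
    · rw [abs_div, abs_pow, Nat.abs_cast]
      exact div_le_self (by positivity) (by exact_mod_cast hr)
  have hbound (m : β) (r : ℕ) : ‖F m r‖ ≤ C * |ρ| ^ r := by
    have hcos : |∑ j, Real.cos (r * θ m j)| ≤ Fintype.card (ι m) := by
      simpa using Finset.abs_sum_le_sum_abs (fun j => Real.cos (r * θ m j)) Finset.univ |>.trans
        (Finset.sum_le_sum fun j _ => Real.abs_cos_le_one _)
    calc ‖F m r‖ = |ρ ^ r / r| * (|w m| * |∑ j, Real.cos (r * θ m j)|) := by
          rw [Real.norm_eq_abs, abs_mul, abs_mul, abs_neg]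
      _ ≤ |ρ| ^ r * (|w m| * Fintype.card (ι m)) := by gcongr; exact hcoef r
      _ ≤ |ρ| ^ r * C := by gcongr; exact hC m
      _ = C * |ρ| ^ r := mul_comm _ _
  simpa only [(hF _).tsum_eq] using tendsto_tsum_of_dominated_convergence
    ((summable_geometric_of_lt_one (abs_nonneg ρ) hρ).mul_left C) hlim (.of_forall hbound)

theorem stmt_16_general (q s : ℝ) (hq : 1 < q) (hs : 1 / 2 < s)
    (g : ℕ → ℕ)
    (α : (m : ℕ) → Fin (2 * g m) → ℝ)
    (hweyl : ∀ r : ℕ, 0 < r →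
      Tendsto (fun m : ℕ => (1 / (2 * (g m : ℝ))) * ∑ j, Real.cos (r * α m j))
        atTop (nhds ((1 - Real.sqrt q) / 2 * q ^ (-(r : ℝ) / 2)))) :
    Tendsto (fun m : ℕ => (1 / (g m : ℝ)) *
        ∑ j, Real.log ‖1 - (Real.sqrt q : ℂ) * Complex.exp (Complex.I * (α m j : ℂ)) *
          ((q ^ (-s) : ℝ) : ℂ)‖)
      atTop (nhds (-(Real.sqrt q - 1) * Real.log (1 - q ^ (-s)))) := by
  have hq0 : 0 < q := by linarith
  set x := q ^ (-s)
  have hx : |x| < 1 := by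
    rw [abs_of_pos (by positivity)]
    exact Real.rpow_lt_one_of_one_lt_of_neg hq (by linarith)
  have hρ : |√q * x| < 1 := by
    rw [abs_of_pos (by positivity), Real.sqrt_eq_rpow, ← Real.rpow_add hq0]
    exact Real.rpow_lt_one_of_one_lt_of_neg hq (by linarith)
  have hcard (m : ℕ) : |1 / (2 * (g m : ℝ))| * Fintype.card (Fin (2 * g m)) ≤ 1 := by
    rw [Fintype.card_fin, abs_of_nonneg (by positivity), one_div]
    push_cast
    exact inv_mul_le_one_of_le₀ le_rfl (by positivity)
  have hsum : ∑' r : ℕ, -((√q * x) ^ r / r * ((1 - √q) / 2 * q ^ (-(r : ℝ) / 2)))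
      = (√q - 1) / 2 * -Real.log (1 - x) := by
    rw [← ((hasSum_pow_div_natCast hx).mul_left _).tsum_eq]
    congr 1 with r
    have : √q ^ r ≠ 0 := by positivity
    rw [rpow_neg_natCast_div_two hq0.le, mul_pow]
    field_simp
    ring
  have hlim := (tendsto_mul_sum_log_norm_one_sub_mul_exp hρ hcard hweyl).const_mul 2
  rw [hsum] at hlim
  convert hlim using 2 with m
  · have hfactor (θ : ℝ) : 1 - (√q : ℂ) * Complex.exp (Complex.I * θ) * (x : ℂ)
        = 1 - ((√q * x : ℝ) : ℂ) * Complex.exp (θ * Complex.I) := by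
      rw [mul_comm Complex.I]
      push_cast
      ring
    simp only [hfactor]
    ring
  · ring

/-- Drinfeld–Vlăduţ equidistribution implies the asymptotics of `(1/g)·log|L_C(s)|`:
if for every positive integer `r` the Weyl sums
`(1/(2gₘ))·∑ⱼ cos(r·α_{m,j})` tend to `((1−√q)/2)·q^{−r/2}`, then for real `s > 1/2`
`(1/gₘ)·∑ⱼ log|1 − √q·e^{iα_{m,j}}·q^{−s}|` tends to `−(√q−1)·log(1−q^{−s})`. -/
theorem stmt_16 (q s : ℝ) (hq : 1 < q) (hs : 1 / 2 < s)
    (g : ℕ → ℕ) (hg : ∀ m, 0 < g m)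
    (α : (m : ℕ) → Fin (2 * g m) → ℝ)
    (hweyl : ∀ r : ℕ, 0 < r →
      Tendsto (fun m : ℕ => (1 / (2 * (g m : ℝ))) * ∑ j, Real.cos (r * α m j))
        atTop (nhds ((1 - Real.sqrt q) / 2 * q ^ (-(r : ℝ) / 2)))) :
    Tendsto (fun m : ℕ => (1 / (g m : ℝ)) *
        ∑ j, Real.log ‖1 - (Real.sqrt q : ℂ) * Complex.exp (Complex.I * (α m j : ℂ)) *
          ((q ^ (-s) : ℝ) : ℂ)‖)
      atTop (nhds (-(Real.sqrt q - 1) * Real.log (1 - q ^ (-s)))) :=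
  stmt_16_general q s hq hs g α hweyl
end

section
/- Let q > 1 be a real number. Define M_n := (q^{n+1} − 1)/(q − 1) for n ≥ 0, and let (A_h)_{h≥0} be the (unique, since M₀ = 1) sequence of real numbers satisfying ∑_{h=0}^{n} M_{n−h}·A_h = M_n² for every n ≥ 0. Then A₀ = 1 and A_h = q^{2h} + q^{2h−1} for every h ≥ 1. -/
/-!
The recursion `M (n + 1) = q * M n + 1`, with `M 0 = 1`, turns the convolution identity at
`n + 1` minus `q` times the one at `n` into a formula for the partial sums of `A`:
`∑_{h ≤ n+1} A h = M (n + 1) ^ 2 - q * M n ^ 2 = (q ^ (2n+3) - 1) / (q - 1)`.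
Consecutive partial sums then differ by `q ^ (2n+2) + q ^ (2n+1)`.
-/

open Finset

section Convolution

variable {R : Type*} {M : ℕ → R} {q : R}

theorem sum_range_mul_sub_succ_of_affine_rec [Semiring R] (hM0 : M 0 = 1)
    (hMs : ∀ k, M (k + 1) = q * M k + 1) (A : ℕ → R) (n : ℕ) :
    ∑ h ∈ range (n + 2), M (n + 1 - h) * A h =
      q * ∑ h ∈ range (n + 1), M (n - h) * A h + ∑ h ∈ range (n + 2), A h := by
  have hshift : ∀ h ∈ range (n + 1), M (n + 1 - h) * A h = q * (M (n - h) * A h) + A h := by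
    intro h hh
    rw [Nat.succ_sub (Nat.lt_succ_iff.mp (mem_range.mp hh)), hMs, add_mul, one_mul, mul_assoc]
  rw [sum_range_succ, sum_congr rfl hshift, sum_add_distrib, ← mul_sum, Nat.sub_self, hM0,
    one_mul, add_assoc, ← sum_range_succ]

theorem sum_range_eq_sq_sub_mul_sq_of_convolution [Ring R] (hM0 : M 0 = 1)
    (hMs : ∀ k, M (k + 1) = q * M k + 1) {A : ℕ → R}
    (hA : ∀ n, ∑ h ∈ range (n + 1), M (n - h) * A h = M n ^ 2) (n : ℕ) :
    ∑ h ∈ range (n + 2), A h = M (n + 1) ^ 2 - q * M n ^ 2 := by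
  rw [← hA, ← hA, sum_range_mul_sub_succ_of_affine_rec hM0 hMs]
  abel

end Convolution

section GeometricQuotient

variable {K : Type*} [Field K] {q : K}

theorem geom_quot_succ (hq : q ≠ 1) (n : ℕ) :
    (q ^ (n + 2) - 1) / (q - 1) = q * ((q ^ (n + 1) - 1) / (q - 1)) + 1 := by
  have : q - 1 ≠ 0 := sub_ne_zero.mpr hq
  field_simp
  ring

theorem geom_quot_sq_sub_mul_sq (hq : q ≠ 1) (n : ℕ) :
    ((q ^ (n + 2) - 1) / (q - 1)) ^ 2 - q * ((q ^ (n + 1) - 1) / (q - 1)) ^ 2 =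
      (q ^ (2 * n + 3) - 1) / (q - 1) := by
  have : q - 1 ≠ 0 := sub_ne_zero.mpr hq
  field_simp
  ring

end GeometricQuotient

/-- For the projective line: with `Mₙ = (q^{n+1}−1)/(q−1)` and `A_h` defined by the
convolution identity `∑_{h≤n} M_{n−h}·A_h = Mₙ²`, one has `A₀ = 1` and
`A_h = q^{2h} + q^{2h−1}` for all `h ≥ 1`. -/
theorem stmt_17 (q : ℝ) (hq : 1 < q)
    (M : ℕ → ℝ) (hM : ∀ n : ℕ, M n = (q ^ (n + 1) - 1) / (q - 1))
    (A : ℕ → ℝ)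
    (hA : ∀ n : ℕ, ∑ h ∈ Finset.range (n + 1), M (n - h) * A h = (M n) ^ 2) :
    A 0 = 1 ∧ ∀ h : ℕ, 1 ≤ h → A h = q ^ (2 * h) + q ^ (2 * h - 1) := by
  have hq1 : q - 1 ≠ 0 := sub_ne_zero.mpr hq.ne'
  have hM0 : M 0 = 1 := by rw [hM, zero_add, pow_one, div_self hq1]
  have hMs : ∀ k, M (k + 1) = q * M k + 1 := fun k => by
    rw [hM, hM]; exact geom_quot_succ hq.ne' k
  have hA0 : A 0 = 1 := by simpa [hM0] using hA 0
  have hpartial : ∀ n, ∑ h ∈ range (n + 1), A h = (q ^ (2 * n + 1) - 1) / (q - 1) := by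
    rintro (_ | n)
    · rw [sum_range_one, hA0, mul_zero, zero_add, pow_one, div_self hq1]
    · rw [sum_range_eq_sq_sub_mul_sq_of_convolution hM0 hMs hA, hM, hM]
      exact geom_quot_sq_sub_mul_sq hq.ne' n
  refine ⟨hA0, fun h hh => ?_⟩
  obtain ⟨n, rfl⟩ := Nat.exists_eq_add_of_le' hh
  rw [← sum_range_succ_sub_sum A, hpartial, hpartial, show 2 * (n + 1) - 1 = 2 * n + 1 by omega]
  field_simp
  ring
end
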